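/- arXiv:math/0509072 — 10 statements merged into one kernel-verified Lean document; each statement's English description precedes it below -/
import Mathlib

section
/- Let U be a linear subspace of ℝ^n such that every nonzero element of U has at least one strictly positive coordinate and at least one strictly negative coordinate (a 'mixed' subspace). Then for every x ∈ ℝ^n, the set M = {x + u | u ∈ U, (x + u)_k ≥ 0 for all k} is bounded. -/
/-- If `U` is a mixed subspace of `ℝⁿ` (every nonzero element has both a
strictly positive and a strictly negative coordinate), then for every `x ∈ ℝⁿ` the set
`M = {x + u | u ∈ U, (x+u)_k ≥ 0 for all k}` is bounded. -/
theorem mixed_subspace_bounded (n : ℕ) (U : Submodule ℝ (Fin n → ℝ))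
    (hmix : ∀ u ∈ U, u ≠ 0 → (∃ k, 0 < u k) ∧ (∃ k, u k < 0))
    (x : Fin n → ℝ) :
    Bornology.IsBounded
      {v : Fin n → ℝ | ∃ u ∈ U, v = x + u ∧ ∀ k, 0 ≤ v k} := by
  rcases Nat.eq_zero_or_pos n with hn | hn
  · subst hn
    refine Bornology.isBounded_singleton (x := x) |>.subset ?_
    intro v _
    simp only [Set.mem_singleton_iff]
    funext k; exact k.elim0
  haveI : Nonempty (Fin n) := Fin.pos_iff_nonempty.mp hn
  set S : Set (Fin n → ℝ) := (U : Set (Fin n → ℝ)) ∩ Metric.sphere 0 1 with hSdef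
  by_cases hS : S.Nonempty
  · -- main case
    have hne : (Finset.univ : Finset (Fin n)).Nonempty := Finset.univ_nonempty
    set f : (Fin n → ℝ) → ℝ := fun u => Finset.univ.inf' hne u with hf
    have hfcont : Continuous f := by
      exact Continuous.finset_inf'_apply hne fun i _ => continuous_apply i
    have hScompact : IsCompact S := by
      apply Metric.isCompact_of_isClosed_isBounded
      · exact (Submodule.closed_of_finiteDimensional U).inter Metric.isClosed_sphere
      · exact Metric.isBounded_sphere.subset Set.inter_subset_right
    obtain ⟨u₀, hu₀S, hmax⟩ := hScompact.exists_isMaxOn hS hfcont.continuousOn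
    have hc : f u₀ < 0 := by
      have hu₀U : u₀ ∈ U := hu₀S.1
      have hu₀ne : u₀ ≠ 0 := by
        intro h
        have := hu₀S.2
        rw [h] at this
        simp at this
      obtain ⟨⟨k₁, _⟩, ⟨k₂, hk₂⟩⟩ := hmix u₀ hu₀U hu₀ne
      exact lt_of_le_of_lt (Finset.inf'_le _ (Finset.mem_univ k₂)) hk₂
    set c : ℝ := -f u₀ with hcdef
    have hcpos : 0 < c := by linarith
    -- key: ∀ u ∈ U, ∃ k, u k ≤ -c * ‖u‖
    have key : ∀ u ∈ U, u ≠ 0 → ∃ k, u k ≤ -c * ‖u‖ := by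
      intro u hu hune
      have hnorm : 0 < ‖u‖ := norm_pos_iff.mpr hune
      set w : Fin n → ℝ := ‖u‖⁻¹ • u with hw
      have hwS : w ∈ S := by
        constructor
        · exact U.smul_mem _ hu
        · simp [hw, norm_smul, abs_of_pos (inv_pos.mpr hnorm),
            inv_mul_cancel₀ (ne_of_gt hnorm)]
      have hfw : f w ≤ -c := by
        have := hmax hwS
        simpa [hcdef] using this
      obtain ⟨k, _, hk⟩ := Finset.exists_mem_eq_inf' hne w
      refine ⟨k, ?_⟩
      have hwk : w k ≤ -c := hk ▸ hfw
      have : ‖u‖⁻¹ * u k ≤ -c := by simpa [hw] using hwk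
      have h2 := mul_le_mul_of_nonneg_left this (le_of_lt hnorm)
      calc u k = ‖u‖ * (‖u‖⁻¹ * u k) := by
                field_simp
        _ ≤ ‖u‖ * (-c) := h2
        _ = -c * ‖u‖ := by ring
    rw [isBounded_iff_forall_norm_le]
    refine ⟨‖x‖ + ‖x‖ / c, ?_⟩
    rintro v ⟨u, hu, rfl, hpos⟩
    have hub : ‖u‖ ≤ ‖x‖ / c := by
      rcases eq_or_ne u 0 with h | h
      · simp [h]; positivity
      · obtain ⟨k, hk⟩ := key u hu h
        have h1 : 0 ≤ x k + u k := hpos k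
        have h2 : -(x k) ≤ u k := by linarith
        have h3 : x k ≤ ‖x‖ := le_trans (le_abs_self _) (norm_le_pi_norm x k)
        have : c * ‖u‖ ≤ ‖x‖ := by nlinarith
        rw [le_div_iff₀ hcpos]; linarith [this]
    calc ‖x + u‖ ≤ ‖x‖ + ‖u‖ := norm_add_le _ _
      _ ≤ ‖x‖ + ‖x‖ / c := by linarith
  · -- U trivial
    have hU : ∀ u ∈ U, u = 0 := by
      intro u hu
      by_contra h
      have hnorm : 0 < ‖u‖ := norm_pos_iff.mpr h
      refine hS ⟨‖u‖⁻¹ • u, U.smul_mem _ hu, ?_⟩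
      simp [norm_smul, abs_of_pos (inv_pos.mpr hnorm),
        inv_mul_cancel₀ (ne_of_gt hnorm)]
    refine Bornology.isBounded_singleton (x := x) |>.subset ?_
    rintro v ⟨u, hu, rfl, _⟩
    simp [hU u hu]
end

section
/- Let U be a linear subspace of ℝ^n. Then U contains no nonzero vector with all coordinates nonnegative (equivalently, U is mixed: every nonzero element of U has both positive and negative coordinates) if and only if for each x ∈ ℝ^n the set {u ∈ U : x + u ≥ 0} is bounded. -/
/-- For a linear subspace `U ⊆ ℝⁿ`, `U` contains no nonzero vector with all
coordinates nonnegative if and only if for each `x` the set `{u ∈ U : x + u ≥ 0}` is bounded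
(boundedness w.r.t. the sup-metric on `Fin n → ℝ`). -/
theorem mixed_iff_bounded (n : ℕ) (U : Submodule ℝ (Fin n → ℝ)) :
    (∀ u ∈ U, (∀ k, 0 ≤ u k) → u = 0) ↔
      ∀ x : Fin n → ℝ,
        Bornology.IsBounded {u : Fin n → ℝ | u ∈ U ∧ ∀ k, 0 ≤ x k + u k} := by
  constructor
  · intro hmix x
    by_contra hS
    rw [isBounded_iff_forall_norm_le] at hS
    push_neg at hS
    -- choose a sequence with norms blowing up
    have hseq : ∀ m : ℕ, ∃ u : Fin n → ℝ,
        (u ∈ U ∧ ∀ k, 0 ≤ x k + u k) ∧ (m : ℝ) + 1 < ‖u‖ := by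
      intro m
      obtain ⟨u, hu, hnorm⟩ := hS ((m : ℝ) + 1)
      exact ⟨u, hu, hnorm⟩
    choose u hu hnorm using hseq
    have hpos : ∀ m : ℕ, (0 : ℝ) < ‖u m‖ := fun m =>
      lt_of_le_of_lt (by positivity) (hnorm m)
    set w : ℕ → Fin n → ℝ := fun m => ‖u m‖⁻¹ • u m with hw
    have hwK : ∀ m, w m ∈ Metric.sphere (0 : Fin n → ℝ) 1 ∩ (U : Set (Fin n → ℝ)) := by
      intro m
      refine ⟨?_, U.smul_mem _ (hu m).1⟩
      simp only [hw, Metric.mem_sphere, dist_zero_right, norm_smul, norm_inv, norm_norm]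
      exact inv_mul_cancel₀ (hpos m).ne'
    have hKc : IsCompact (Metric.sphere (0 : Fin n → ℝ) 1 ∩ (U : Set (Fin n → ℝ))) :=
      (isCompact_sphere 0 1).inter_right U.closed_of_finiteDimensional
    obtain ⟨a, haK, φ, hφ, hconv⟩ := hKc.tendsto_subseq hwK
    -- norms of the subsequence tend to infinity
    have hnφ : Filter.Tendsto (fun m => ‖u (φ m)‖) Filter.atTop Filter.atTop := by
      apply Filter.tendsto_atTop_mono (f := fun m : ℕ => (m : ℝ))
      · intro m
        have h1 : (m : ℝ) ≤ (φ m : ℝ) := by exact_mod_cast hφ.le_apply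
        linarith [hnorm (φ m)]
      · exact tendsto_natCast_atTop_atTop
    -- each coordinate of a is nonnegative
    have ha_nonneg : ∀ k, 0 ≤ a k := by
      intro k
      have hconvk : Filter.Tendsto (fun m => w (φ m) k) Filter.atTop (nhds (a k)) :=
        (tendsto_pi_nhds.mp hconv) k
      have hlow : Filter.Tendsto (fun m => -x k / ‖u (φ m)‖) Filter.atTop (nhds 0) :=
        Filter.Tendsto.div_atTop tendsto_const_nhds hnφ
      refine le_of_tendsto_of_tendsto' hlow hconvk (fun m => ?_)
      have h1 : 0 ≤ x k + u (φ m) k := (hu (φ m)).2 k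
      have h2 : (0 : ℝ) < ‖u (φ m)‖ := hpos (φ m)
      have : -x k ≤ u (φ m) k := by linarith
      simp only [hw, Pi.smul_apply, smul_eq_mul]
      rw [div_eq_inv_mul]
      exact mul_le_mul_of_nonneg_left this (inv_nonneg.mpr h2.le)
    have ha0 : a = 0 := hmix a haK.2 ha_nonneg
    have : ‖a‖ = 1 := by
      have := haK.1
      simpa [dist_zero_right] using this
    rw [ha0] at this
    simp at this
  · intro hB u huU hunn
    by_contra hne
    have hupos : 0 < ‖u‖ := norm_pos_iff.mpr hne
    obtain ⟨C, hC⟩ := isBounded_iff_forall_norm_le.mp (hB 0)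
    have key : ∀ t : ℝ, 0 ≤ t → t * ‖u‖ ≤ C := by
      intro t ht
      have : t • u ∈ {v : Fin n → ℝ | v ∈ U ∧ ∀ k, 0 ≤ (0 : Fin n → ℝ) k + v k} := by
        refine ⟨U.smul_mem _ huU, fun k => ?_⟩
        simp only [Pi.zero_apply, zero_add, Pi.smul_apply, smul_eq_mul]
        exact mul_nonneg ht (hunn k)
      have := hC _ this
      rwa [norm_smul, Real.norm_of_nonneg ht] at this
    have hC0 : 0 ≤ C := by simpa using key 0 le_rfl
    have h1 := key ((C + 1) / ‖u‖) (div_nonneg (by linarith) hupos.le)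
    rw [div_mul_cancel₀ _ (ne_of_gt hupos)] at h1
    linarith
end

section
/- Let U be a linear subspace of ℝ^n whose only componentwise-nonnegative element is 0. Then for every t ∈ ℝ^n the set {v ∈ ℤ^n : v ≥ 0, v ∈ t + U} of nonnegative integer vectors in t + U is finite. -/
/-- If `U ⊆ ℝⁿ` is a subspace whose only componentwise-nonnegative element is `0`,
then for every `t ∈ ℝⁿ` the set of nonnegative integer vectors lying on the affine translate
`t + U` is finite. -/
theorem finitely_many_nonneg_integer_points (n : ℕ) (U : Submodule ℝ (Fin n → ℝ))
    (hU : ∀ u ∈ U, (∀ k, 0 ≤ u k) → u = 0) (t : Fin n → ℝ) :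
    {v : Fin n → ℤ | (∀ k, 0 ≤ v k) ∧ ((fun k => (v k : ℝ)) - t) ∈ U}.Finite := by
  set S := {v : Fin n → ℤ | (∀ k, 0 ≤ v k) ∧ ((fun k => (v k : ℝ)) - t) ∈ U} with hS
  by_contra hinf
  have hinf' : S.Infinite := hinf
  obtain ⟨f, finj⟩ := hinf'.natEmbedding
  have hpwo : Set.IsPWO (Set.univ : Set (Fin n → ℕ)) :=
    Set.isPWO_of_wellQuasiOrderedLE _
  obtain ⟨a, b, hab, hle⟩ :=
    Set.PartiallyWellOrderedOn.exists_lt hpwo (f := fun m k => ((f m : Fin n → ℤ) k).toNat) (fun m => Set.mem_univ _)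
  obtain ⟨hfa1, hfa2⟩ := (f a).2
  obtain ⟨hfb1, hfb2⟩ := (f b).2
  have hle' : ∀ k, ((f a : Fin n → ℤ) k) ≤ ((f b : Fin n → ℤ) k) := by
    intro k
    have h1 := hfa1 k
    have h2 := hfb1 k
    have h3 : ((f a : Fin n → ℤ) k).toNat ≤ ((f b : Fin n → ℤ) k).toNat := hle k
    omega
  -- the difference lies in U and is nonnegative
  have hmem : ((fun k => (((f b : Fin n → ℤ) k : ℝ))) - fun k => (((f a : Fin n → ℤ) k : ℝ))) ∈ U := by
    have := U.sub_mem hfb2 hfa2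
    convert this using 1
    ext k
    simp
  have hnonneg : ∀ k, (0 : ℝ) ≤ ((fun k => (((f b : Fin n → ℤ) k : ℝ))) - fun k => (((f a : Fin n → ℤ) k : ℝ))) k := by
    intro k
    simp only [Pi.sub_apply, sub_nonneg, Int.cast_le]
    exact hle' k
  have hzero := hU _ hmem hnonneg
  have heq : (f a : Fin n → ℤ) = (f b : Fin n → ℤ) := by
    ext k
    have := congrFun hzero k
    simp only [Pi.sub_apply, Pi.zero_apply, sub_eq_zero, Int.cast_inj] at this
    exact this.symm
  have : f a = f b := Subtype.ext heq
  exact absurd (finj this) (Nat.ne_of_lt hab)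
end

section
/- Let C be an n×n real matrix whose kernel is a mixed subspace (contains no nonzero componentwise-nonnegative vector). Then for every t ∈ ℝ^n the set of nonnegative integer vectors v ∈ ℕ₀^n satisfying C v = t is finite. -/
/-!
On a closed cone `K` in a finite-dimensional space meeting `ker f` only in `0`, the continuous
function `u ↦ ‖f u‖` is positive on the compact set `K ∩ sphere 0 1`, hence bounded below by some
`δ > 0`; by homogeneity `δ ‖x‖ ≤ ‖f x‖` on all of `K`. So `{x ∈ K | f x = t}` lies in the ball of
radius `‖t‖ / δ`. For `K` the nonnegative orthant and `f = C`, a mixed kernel gives exactly this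
hypothesis, and a bounded set contains only finitely many integer points.
-/

open Bornology Metric

section Cone

variable {E F : Type*} [NormedAddCommGroup E] [NormedSpace ℝ E] [FiniteDimensional ℝ E]
  [NormedAddCommGroup F] [NormedSpace ℝ F]

theorem ProperCone.exists_pos_forall_mul_norm_le_norm_apply (K : ProperCone ℝ E)
    (f : E →ₗ[ℝ] F) (hf : ∀ x ∈ K, f x = 0 → x = 0) :
    ∃ δ > 0, ∀ x ∈ K, δ * ‖x‖ ≤ ‖f x‖ := by
  have hcompact : IsCompact ((K : Set E) ∩ sphere 0 1) :=
    (isCompact_sphere 0 1).inter_left K.isClosed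
  have hpos : ∀ u ∈ (K : Set E) ∩ sphere 0 1, 0 < ‖f u‖ := by
    rintro u ⟨huK, hu⟩
    refine norm_pos_iff.mpr fun hfu => ?_
    simp [hf u huK hfu] at hu
  obtain ⟨δ, hδ, hδle⟩ :=
    hcompact.exists_forall_le' f.continuous_of_finiteDimensional.norm.continuousOn hpos
  refine ⟨δ, hδ, fun x hx => ?_⟩
  rcases eq_or_ne x 0 with rfl | hx0
  · simp
  have hxpos : 0 < ‖x‖ := norm_pos_iff.mpr hx0
  have hunit : ‖x‖⁻¹ • x ∈ (K : Set E) ∩ sphere 0 1 :=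
    ⟨K.smul_mem hx (inv_nonneg.mpr hxpos.le), by simp [norm_smul, hxpos.ne']⟩
  have := hδle _ hunit
  rwa [map_smul, norm_smul, norm_inv, norm_norm, ← div_eq_inv_mul, le_div_iff₀ hxpos] at this

theorem ProperCone.isBounded_setOf_mem_apply_eq (K : ProperCone ℝ E) (f : E →ₗ[ℝ] F)
    (hf : ∀ x ∈ K, f x = 0 → x = 0) (t : F) :
    IsBounded {x | x ∈ K ∧ f x = t} := by
  obtain ⟨δ, hδ, hδle⟩ := K.exists_pos_forall_mul_norm_le_norm_apply f hf
  refine isBounded_iff_forall_norm_le.mpr ⟨‖t‖ / δ, ?_⟩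
  rintro x ⟨hx, rfl⟩
  rw [le_div_iff₀ hδ, mul_comm]
  exact hδle x hx

end Cone

theorem finite_setOf_intCast_mem_of_isBounded {ι : Type*} [Fintype ι] {s : Set (ι → ℝ)}
    (hs : IsBounded s) : {v : ι → ℤ | (fun k => (v k : ℝ)) ∈ s}.Finite := by
  have hiso : Isometry fun (v : ι → ℤ) k => (v k : ℝ) :=
    Isometry.piMap (fun _ => (↑) : ι → ℤ → ℝ) fun _ => Real.isometry_intCast
  have hpre : IsBounded {v : ι → ℤ | (fun k => (v k : ℝ)) ∈ s} :=
    hiso.antilipschitz.isBounded_preimage hs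
  simpa using finite_isBounded_inter_isClosed IsDiscrete.univ hpre isClosed_univ

/-- If `C` is an `n × n` real matrix whose kernel is mixed (every nonzero element
of the kernel has both a strictly positive and a strictly negative coordinate), then for every
`t ∈ ℝⁿ` the set of nonnegative integer vectors `v` with `C v = t` is finite. -/
theorem finitely_many_nonneg_integer_solutions (n : ℕ) (C : Matrix (Fin n) (Fin n) ℝ)
    (hmix : ∀ u : Fin n → ℝ, C.mulVec u = 0 → u ≠ 0 → (∃ k, 0 < u k) ∧ (∃ k, u k < 0))
    (t : Fin n → ℝ) :
    {v : Fin n → ℤ | (∀ k, 0 ≤ v k) ∧ C.mulVec (fun k => (v k : ℝ)) = t}.Finite := by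
  have hker : ∀ u ∈ ProperCone.positive ℝ (Fin n → ℝ), C.mulVecLin u = 0 → u = 0 := by
    intro u hu hCu
    by_contra hne
    obtain ⟨-, k, hk⟩ := hmix u hCu hne
    exact (hu k).not_gt hk
  refine (finite_setOf_intCast_mem_of_isBounded
    ((ProperCone.positive ℝ _).isBounded_setOf_mem_apply_eq C.mulVecLin hker t)).subset ?_
  rintro v ⟨hv, hCv⟩
  exact ⟨fun k => Int.cast_nonneg (hv k), hCv⟩
end

section
/- Let C be the generalized Cartan matrix of a connected graph that is neither Dynkin (A, D, E) nor extended Dynkin (Ã, D̃, Ẽ) — i.e. a wild graph. Then the kernel of C contains no nonzero vector whose components are all nonnegative. -/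
/-! A nonzero nonnegative kernel vector `x` of the Cartan matrix is positive everywhere: if
`x a > 0` and `a`, `b` are adjacent, row `b` of `C x = 0` gives `2 x b ≥ m b a · x a > 0`, and the
graph is connected. Writing an arbitrary vector as `x * u`, the quadratic form is
`-½ ∑ C p q · x p · x q · (u p - u q)²` (since `C x = 0`), which is nonnegative because the
off-diagonal entries of `C` are nonpositive. So `C` is positive semidefinite but, having `x` in
its kernel, not positive definite: the graph would be extended Dynkin. -/

open Matrix Finset

namespace Matrix

variable {ι : Type*} [Fintype ι] {C : Matrix ι ι ℝ} {x : ι → ℝ}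

theorem IsSymm.two_mul_dotProduct_mulVec_mul (hC : C.IsSymm) (u : ι → ℝ) :
    2 * ((x * u) ⬝ᵥ C *ᵥ (x * u)) =
      2 * ∑ p, u p ^ 2 * x p * (C *ᵥ x) p -
        ∑ p, ∑ q, C p q * x p * x q * (u p - u q) ^ 2 := by
  have hswap : ∑ p, ∑ q, C p q * x p * x q * (u q ^ 2 - u q * u p) =
      ∑ p, ∑ q, C p q * x p * x q * (u p ^ 2 - u p * u q) := by
    rw [Finset.sum_comm]
    refine sum_congr rfl fun p _ => sum_congr rfl fun q _ => ?_
    rw [hC.apply p q]; ring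
  have hsplit : ∑ p, ∑ q, C p q * x p * x q * (u p - u q) ^ 2 =
      2 * ∑ p, ∑ q, C p q * x p * x q * (u p ^ 2 - u p * u q) := by
    rw [two_mul]
    nth_rewrite 2 [← hswap]
    simp only [← sum_add_distrib]
    exact sum_congr rfl fun p _ => sum_congr rfl fun q _ => by ring
  rw [hsplit]
  simp only [dotProduct, mulVec, Pi.mul_apply, mul_sum, ← sum_sub_distrib]
  exact sum_congr rfl fun p _ => sum_congr rfl fun q _ => by ring

theorem posSemidef_of_offDiag_nonpos_of_mulVec_nonneg (hC : C.IsSymm)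
    (hoff : ∀ p q, p ≠ q → C p q ≤ 0) (hx : ∀ p, 0 < x p) (hCx : 0 ≤ C *ᵥ x) :
    C.PosSemidef := by
  refine posSemidef_iff_dotProduct_mulVec.mpr ⟨isHermitian_iff_isSymm.mpr hC, fun y => ?_⟩
  have hy : x * (y / x) = y := by
    ext p; simp [mul_div_cancel₀ _ (hx p).ne']
  have hcross : ∑ p, ∑ q, C p q * x p * x q * ((y / x) p - (y / x) q) ^ 2 ≤ 0 := by
    refine sum_nonpos fun p _ => sum_nonpos fun q _ => ?_
    rcases eq_or_ne p q with rfl | hpq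
    · simp
    · exact mul_nonpos_of_nonpos_of_nonneg
        (mul_nonpos_of_nonpos_of_nonneg (mul_nonpos_of_nonpos_of_nonneg (hoff p q hpq)
          (hx p).le) (hx q).le) (sq_nonneg _)
  have hdiag : 0 ≤ ∑ p, (y / x) p ^ 2 * x p * (C *ᵥ x) p :=
    sum_nonneg fun p _ => mul_nonneg (mul_nonneg (sq_nonneg _) (hx p).le) (hCx p)
  have := hC.two_mul_dotProduct_mulVec_mul (x := x) (y / x)
  rw [hy] at this
  simp only [star_trivial]
  linarith

theorem not_posDef_of_mulVec_eq_zero (hx : x ≠ 0) (hCx : C *ᵥ x = 0) : ¬ C.PosDef :=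
  fun hC => by simpa [hCx] using hC.dotProduct_mulVec_pos hx

theorem pos_of_offDiag_neg {a b : ι} (hoff : ∀ p q, p ≠ q → C p q ≤ 0) (hx : 0 ≤ x)
    (hCx : 0 ≤ (C *ᵥ x) b) (hab : a ≠ b) (hba : C b a < 0) (ha : 0 < x a) : 0 < x b := by
  classical
  have hrest : ∑ q ∈ (univ.erase b).erase a, C b q * x q ≤ 0 :=
    sum_nonpos fun q hq => mul_nonpos_of_nonpos_of_nonneg
      (hoff b q (ne_of_mem_erase (mem_of_mem_erase hq)).symm) (hx q)
  have hrow : (C *ᵥ x) b =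
      C b b * x b + (C b a * x a + ∑ q ∈ (univ.erase b).erase a, C b q * x q) := by
    rw [add_sum_erase _ (fun q => C b q * x q) (mem_erase.2 ⟨hab, mem_univ a⟩),
      add_sum_erase _ (fun q => C b q * x q) (mem_univ b)]
    rfl
  have : 0 < C b b * x b := by linarith [mul_neg_of_neg_of_pos hba ha]
  exact (hx b).lt_of_ne fun h => by simp [← h] at this

theorem pos_of_reflTransGen (hoff : ∀ p q, p ≠ q → C p q ≤ 0) (hx : 0 ≤ x)
    (hCx : 0 ≤ C *ᵥ x) {p q : ι} (hpq : Relation.ReflTransGen (fun a b => a ≠ b ∧ C b a < 0) p q)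
    (hp : 0 < x p) : 0 < x q := by
  induction hpq with
  | refl => exact hp
  | tail _ hab ih => exact pos_of_offDiag_neg hoff hx (hCx _) hab.1 hab.2 ih

end Matrix

theorem wild_cartan_kernel_mixed_general (n : ℕ)
    (m : Fin (n + 1) → Fin (n + 1) → ℕ)
    (hsymm : ∀ p q, m p q = m q p) (hloop : ∀ p, m p p = 0)
    (hconn : ∀ p q, Relation.ReflTransGen (fun a b => 0 < m a b) p q)
    (C : Matrix (Fin (n + 1)) (Fin (n + 1)) ℝ)
    (hC : ∀ p q, C p q = if p = q then 2 else -(m p q : ℝ))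
    (hnotExtended : ¬ (C.PosSemidef ∧ ¬ C.PosDef)) :
    ∀ x : Fin (n + 1) → ℝ, C.mulVec x = 0 → (∀ i, 0 ≤ x i) → x = 0 := by
  intro x hker hnn
  by_contra hx0
  have hCsymm : C.IsSymm := IsSymm.ext_iff.mpr fun p q => by simp only [hC, hsymm p q, eq_comm]
  have hoff : ∀ p q, p ≠ q → C p q ≤ 0 := fun p q hpq => by simp [hC, hpq]
  have hedge : ∀ a b, 0 < m a b → a ≠ b ∧ C b a < 0 := fun a b hab =>
    have hab' : a ≠ b := by rintro rfl; simp [hloop] at hab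
    ⟨hab', by simpa [hC, hab'.symm, hsymm b a] using hab⟩
  obtain ⟨p₀, hp₀⟩ := Function.ne_iff.mp hx0
  have hpos : ∀ q, 0 < x q := fun q =>
    pos_of_reflTransGen hoff hnn hker.ge (Relation.ReflTransGen.mono hedge _ _ (hconn p₀ q)) ((hnn p₀).lt_of_ne' hp₀)
  exact hnotExtended
    ⟨posSemidef_of_offDiag_nonpos_of_mulVec_nonneg hCsymm hoff hpos hker.ge,
      not_posDef_of_mulVec_eq_zero hx0 hker⟩

/-- Let `C` be the generalised Cartan matrix of a finite connected graph which is
neither Dynkin (i.e. `C` is not positive definite) nor extended Dynkin (i.e. it is not the case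
that `C` is positive semidefinite without being positive definite) — a wild graph.  Then the
kernel of `C` contains no nonzero componentwise-nonnegative vector. -/
theorem wild_cartan_kernel_mixed (n : ℕ)
    (m : Fin (n + 1) → Fin (n + 1) → ℕ)
    (hsymm : ∀ p q, m p q = m q p) (hloop : ∀ p, m p p = 0)
    (hconn : ∀ p q, Relation.ReflTransGen (fun a b => 0 < m a b) p q)
    (C : Matrix (Fin (n + 1)) (Fin (n + 1)) ℝ)
    (hC : ∀ p q, C p q = if p = q then 2 else -(m p q : ℝ))
    (hnotDynkin : ¬ C.PosDef)
    (hnotExtended : ¬ (C.PosSemidef ∧ ¬ C.PosDef)) :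
    ∀ x : Fin (n + 1) → ℝ, C.mulVec x = 0 → (∀ i, 0 ≤ x i) → x = 0 :=
  wild_cartan_kernel_mixed_general n m hsymm hloop hconn C hC hnotExtended
end

section
/- Let D_i be the set of triples (M,U,V) with M ≤ U ⊕ V a degeneration of preprojective modules over a wild quiver Q and μ(M) ≤ i. Define t(M,U,V)_p = Σ_{l≥0} s(δ_M, τ^{-l}P_p) ∈ ℤ^{Q₀}. Then t(D_i) is a finite set: every component of any t ∈ t(D_i) is ≥ −2, and the sum of all components of t(M,U,V) equals μ(M) − 2. -/
/-!  Combinatorial model of the preprojective component of the Auslander–Reiten quiver of a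
finite acyclic quiver with vertex set `V` and `narr p q` arrows from `p` to `q`.
The pair `(l, p) : ℕ × V` represents the indecomposable preprojective module `τ^{-l} P_p`. -/

open Finset

/-- There is an arrow `τ^{-l}P_q → τ^{-l}P_p` (multiplicity `narr p q`) and an arrow
`τ^{-l}P_q → τ^{-(l+1)}P_p` (multiplicity `narr q p`) in the preprojective component. -/
def ArrowTo {V : Type} (narr : V → V → ℕ) (a b : ℕ × V) : Prop :=
  (a.1 = b.1 ∧ 0 < narr b.2 a.2) ∨ (a.1 + 1 = b.1 ∧ 0 < narr a.2 b.2)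

/-- The path order `⪯` on the preprojective component. -/
def Pre {V : Type} (narr : V → V → ℕ) : ℕ × V → ℕ × V → Prop :=
  Relation.ReflTransGen (ArrowTo narr)

/-- `τ⁻¹`. -/
def tauInv {V : Type} (x : ℕ × V) : ℕ × V := (x.1 + 1, x.2)

/-- `τ` (with junk value on projectives). -/
def tauAR {V : Type} (x : ℕ × V) : ℕ × V := (x.1 - 1, x.2)

/-- The value of an additive function `d` on the middle term of the AR-sequence ending in `W`
(= the radical of `P_p` when `W = (0, p)` is projective). -/
def arMid {V : Type} [Fintype V] (narr : V → V → ℕ) (d : ℕ × V → ℕ) (W : ℕ × V) : ℤ :=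
  (∑ q : V, (narr W.2 q : ℤ) * d (W.1, q)) +
    (if W.1 = 0 then 0 else ∑ q : V, (narr q W.2 : ℤ) * d (W.1 - 1, q))

/-- The subadditivity defect `s(δ, W) = δ(arsm W) - δ(τW) - δ(W)` (no `τW` term for
projective `W`). -/
def sdef {V : Type} [Fintype V] (narr : V → V → ℕ) (d : ℕ × V → ℕ) (W : ℕ × V) : ℤ :=
  arMid narr d W - (if W.1 = 0 then 0 else (d (W.1 - 1, W.2) : ℤ)) - d W

/-- A deformation shape of the pair `(U, V)` of preprojective indecomposables
(Definition B.defshape): a nonnegative integral function on the preprojective component,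
supported in the interval `[U, τV]`, subadditive at every point other than `U` and `V`, and
normalised by `δ(U) = δ(τV) = 1`. -/
structure DefShape {V : Type} [Fintype V] (narr : V → V → ℕ) (U Vv : ℕ × V) where
  d : ℕ × V → ℕ
  supp : ∀ W, 0 < d W → Pre narr U W ∧ Pre narr W (tauAR Vv)
  subadd : ∀ W, W ≠ U → W ≠ Vv → 0 ≤ sdef narr d W
  normU : d U = 1
  normV : d (tauAR Vv) = 1

/-- A finite box containing the support of any deformation shape of `(U, V)`,
with `U` and `V` removed. -/
def codimBox {V : Type} [Fintype V] [DecidableEq V] (U Vv : ℕ × V) : Finset (ℕ × V) :=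
  (((Finset.range (Vv.1 + 1)) ×ˢ (Finset.univ : Finset V)).erase U).erase Vv

/-- The codimension `δ_M(M) + 1 = 1 + Σ_W s(δ,W)·δ(W)` of the minimal degeneration attached
to a deformation shape (Lemma B.deltaFkt (c)). -/
def codim {V : Type} [Fintype V] [DecidableEq V] (narr : V → V → ℕ) (U Vv : ℕ × V)
    (δ : DefShape narr U Vv) : ℤ :=
  1 + ∑ W ∈ codimBox U Vv, sdef narr δ.d W * δ.d W

/-- The number of indecomposable direct summands (blocks) `μ(M_δ) = Σ_W s(δ,W)` of the module
corresponding to a deformation shape. -/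
def muBlocks {V : Type} [Fintype V] [DecidableEq V] (narr : V → V → ℕ) (U Vv : ℕ × V)
    (δ : DefShape narr U Vv) : ℕ :=
  ∑ W ∈ codimBox U Vv, (sdef narr δ.d W).toNat

/-- The generalised Cartan matrix of the quiver. -/
def cartan {V : Type} [DecidableEq V] (narr : V → V → ℕ) : Matrix V V ℤ :=
  Matrix.of fun p q => if p = q then 2 else -((narr p q : ℤ) + (narr q p : ℤ))

/-- The vector `t(M,U,V)_p = Σ_l s(δ_M, τ^{-l}P_p)`, where the subadditivity defect is set to
`-1` at `U` and at `V` (the sum is finite: it is supported in levels `≤ V.1`). -/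
def tVec {V : Type} [Fintype V] [DecidableEq V] (narr : V → V → ℕ) (U Vv : ℕ × V)
    (δ : DefShape narr U Vv) : V → ℤ :=
  fun p => ∑ l ∈ Finset.range (Vv.1 + 1),
    if (l, p) = U ∨ (l, p) = Vv then -1 else sdef narr δ.d (l, p)

lemma pre_level_le {V : Type} {narr : V → V → ℕ} {a b : ℕ × V} (h : Pre narr a b) :
    a.1 ≤ b.1 := by
  induction h with
  | refl => exact le_refl _
  | tail _ h2 ih =>
    rcases h2 with ⟨h, _⟩ | ⟨h, _⟩ <;> omega

/-- every component of `t(M,U,V)` is `≥ -2`, the sum of all components equals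
`μ(M) - 2`, and consequently the set `t(D_i)` of all such vectors coming from degenerations
with `μ(M) ≤ i` is finite. -/
theorem tVec_finite (V : Type) [Fintype V] [DecidableEq V]
    (narr : V → V → ℕ)
    (hwild : ∀ x : V → ℝ,
      Matrix.mulVec ((cartan narr).map (Int.cast : ℤ → ℝ)) x = 0 → (∀ i, 0 ≤ x i) → x = 0)
    (i : ℕ) :
    (∀ (U Vv : ℕ × V) (δ : DefShape narr U Vv), Pre narr (tauInv U) Vv →
      (∀ p, -2 ≤ tVec narr U Vv δ p) ∧
      (∑ p : V, tVec narr U Vv δ p = (muBlocks narr U Vv δ : ℤ) - 2)) ∧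
    {t : V → ℤ | ∃ (U Vv : ℕ × V) (δ : DefShape narr U Vv),
      Pre narr (tauInv U) Vv ∧ muBlocks narr U Vv δ ≤ i ∧ t = tVec narr U Vv δ}.Finite := by
  have key : ∀ (U Vv : ℕ × V) (δ : DefShape narr U Vv), Pre narr (tauInv U) Vv →
      (∀ p, -2 ≤ tVec narr U Vv δ p) ∧
      (∑ p : V, tVec narr U Vv δ p = (muBlocks narr U Vv δ : ℤ) - 2) := by
    intro U Vv δ hpath
    have hlt : U.1 < Vv.1 := by
      have := pre_level_le hpath
      simp only [tauInv] at this
      omega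
    have hne : U ≠ Vv := by
      intro h; rw [h] at hlt; exact lt_irrefl _ hlt
    have hsdef : ∀ W : ℕ × V, W ≠ U → W ≠ Vv → 0 ≤ sdef narr δ.d W := δ.subadd
    constructor
    · -- lower bound on each component
      intro p
      unfold tVec
      have hterm : ∀ l ∈ Finset.range (Vv.1 + 1),
          (if (l, p) = U ∨ (l, p) = Vv then (-1 : ℤ) else 0) ≤
          (if (l, p) = U ∨ (l, p) = Vv then -1 else sdef narr δ.d (l, p)) := by
        intro l _
        by_cases h : (l, p) = U ∨ (l, p) = Vv
        · simp [h]
        · push_neg at h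
          simp only [if_neg (not_or.mpr h)]
          exact hsdef _ h.1 h.2
      refine le_trans ?_ (Finset.sum_le_sum hterm)
      have hcount : ∑ l ∈ Finset.range (Vv.1 + 1),
          (if (l, p) = U ∨ (l, p) = Vv then (-1 : ℤ) else 0)
          = -(((Finset.range (Vv.1 + 1)).filter
              (fun l => (l, p) = U ∨ (l, p) = Vv)).card : ℤ) := by
        rw [Finset.sum_ite, Finset.sum_const, Finset.sum_const]
        simp
      rw [hcount]
      have hsub : ((Finset.range (Vv.1 + 1)).filter
          (fun l => (l, p) = U ∨ (l, p) = Vv)) ⊆ {U.1, Vv.1} := by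
        intro l hl
        simp only [Finset.mem_filter] at hl
        rcases hl.2 with h | h
        · simp [← h]
        · simp [← h]
      have hcard := Finset.card_le_card hsub
      have h2 : ({U.1, Vv.1} : Finset ℕ).card ≤ 2 :=
        le_trans (Finset.card_insert_le _ _) (by simp)
      have := le_trans hcard h2
      omega
    · -- the sum formula
      set box : Finset (ℕ × V) := (Finset.range (Vv.1 + 1)) ×ˢ (Finset.univ : Finset V)
        with hbox
      set F : ℕ × V → ℤ := fun W =>
        if W = U ∨ W = Vv then -1 else sdef narr δ.d W with hF
      have hUbox : U ∈ box := by
        simp [hbox, Finset.mem_product]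
        omega
      have hVbox : Vv ∈ box := by
        simp [hbox, Finset.mem_product]
      have hsum1 : ∑ p : V, tVec narr U Vv δ p = ∑ W ∈ box, F W := by
        unfold tVec
        rw [hbox, Finset.sum_product]
        rw [Finset.sum_comm]
      have hVerase : Vv ∈ box.erase U := Finset.mem_erase.mpr ⟨fun h => hne h.symm, hVbox⟩
      have hsplit1 : ∑ W ∈ box.erase U, F W + F U = ∑ W ∈ box, F W :=
        Finset.sum_erase_add box F hUbox
      have hsplit2 : ∑ W ∈ (box.erase U).erase Vv, F W + F Vv = ∑ W ∈ box.erase U, F W :=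
        Finset.sum_erase_add _ F hVerase
      have hFU : F U = -1 := by simp [hF]
      have hFV : F Vv = -1 := by simp [hF]
      have hcong : ∑ W ∈ (box.erase U).erase Vv, F W
          = ∑ W ∈ (box.erase U).erase Vv, sdef narr δ.d W := by
        apply Finset.sum_congr rfl
        intro W hW
        have hWV : W ≠ Vv := (Finset.mem_erase.mp hW).1
        have hWU : W ≠ U := (Finset.mem_erase.mp (Finset.mem_erase.mp hW).2).1
        simp [hF, hWU, hWV]
      have hmu : (muBlocks narr U Vv δ : ℤ) = ∑ W ∈ (box.erase U).erase Vv, sdef narr δ.d W := by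
        unfold muBlocks codimBox
        push_cast
        apply Finset.sum_congr rfl
        intro W hW
        have hWV : W ≠ Vv := (Finset.mem_erase.mp hW).1
        have hWU : W ≠ U := (Finset.mem_erase.mp (Finset.mem_erase.mp hW).2).1
        exact Int.toNat_of_nonneg (hsdef W hWU hWV)
      rw [hsum1, ← hsplit1, ← hsplit2, hFU, hFV, hcong, hmu]
      ring
  refine ⟨key, ?_⟩
  apply Set.Finite.subset
    (Set.Finite.pi (fun _ : V => Set.finite_Icc (-2 : ℤ) ((i : ℤ) + 2 * Fintype.card V)))
  rintro t ⟨U, Vv, δ, hpath, hmu, rfl⟩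
  obtain ⟨hlb, hsum⟩ := key U Vv δ hpath
  intro p _
  refine Set.mem_Icc.mpr ⟨hlb p, ?_⟩
  have h1 : ∑ q : V, tVec narr U Vv δ q ≤ (i : ℤ) - 2 := by
    rw [hsum]
    have : (muBlocks narr U Vv δ : ℤ) ≤ (i : ℤ) := by exact_mod_cast hmu
    omega
  have hsplit : ∑ q ∈ Finset.univ.erase p, tVec narr U Vv δ q + tVec narr U Vv δ p
      = ∑ q : V, tVec narr U Vv δ q :=
    Finset.sum_erase_add _ _ (Finset.mem_univ p)
  have hlow : (Finset.univ.erase p).card • (-2 : ℤ)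
      ≤ ∑ q ∈ Finset.univ.erase p, tVec narr U Vv δ q :=
    Finset.card_nsmul_le_sum _ _ _ (fun q _ => hlb q)
  have hc : ((Finset.univ.erase p).card : ℤ) ≤ (Fintype.card V : ℤ) := by
    exact_mod_cast Finset.card_le_card (Finset.erase_subset _ _)
  rw [nsmul_eq_mul] at hlow
  linarith
end

section
/- Let Q be the quiver as in Lemma R.defekt, i.e. a tame quiver of type Ã, D̃, or Ẽ with one additional vertex w, δ : Z → ℤ a function on the preprojective component, R a slice, and p ≠ w a vertex such that τ^{-i}P_p is a source in R. Then d_R(δ) − d_{r_p(R)}(δ) = n_p · (−δ_R(p) − δ_{r_p(R)}(p) − Σ_{q ≠ p,w} C_{pq} δ_R(q)), where n is the null-root of the tame subquiver, C its Cartan data extended to Q, and r_p(R) the reflection of R at p. -/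
/-!  Combinatorial model of the preprojective component of the Auslander–Reiten quiver of a
finite acyclic quiver with vertex set `V` and `narr p q` arrows from `p` to `q`.
The pair `(l, p) : ℕ × V` represents the indecomposable preprojective module `τ^{-l} P_p`. -/

open Finset

/-- A slice of the preprojective component, encoded by the level `r j` of the unique point
`τ^{-r j}P_j` of the slice in the `τ`-orbit of `P_j`: for every arrow `j → k` of the quiver
the two points must be joined by an AR-quiver arrow. -/
def IsSlice {V : Type} (narr : V → V → ℕ) (r : V → ℕ) : Prop :=
  ∀ j k, 0 < narr j k → r k = r j ∨ r k = r j + 1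

/-- `τ^{-r p}P_p` is a source of the slice `r`. -/
def IsSourceAt {V : Type} (narr : V → V → ℕ) (r : V → ℕ) (p : V) : Prop :=
  (∀ q, 0 < narr p q → r q = r p + 1) ∧ (∀ q, 0 < narr q p → r q = r p)

/-- The reflection `r_p(R)` of a slice at a source `p`: replace `τ^{-r p}P_p` by
`τ^{-(r p + 1)}P_p`. -/
def reflectSlice {V : Type} [DecidableEq V] (r : V → ℕ) (p : V) : V → ℕ :=
  Function.update r p (r p + 1)

/-- `m(j,k)`: the number of AR-quiver arrows inside the slice `r` from the point in the
`τ`-orbit of `P_j` to the point in the `τ`-orbit of `P_k`. -/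
def marr {V : Type} (narr : V → V → ℕ) (r : V → ℕ) (j k : V) : ℕ :=
  (if r k = r j then narr k j else 0) + (if r k = r j + 1 then narr j k else 0)

/-- The weight `w_j = n_j - Σ_{k ≠ w} m(j,k) n_k` of the vertex `j ≠ w` on the slice `r`,
where `n` is the null-root of the tame subquiver obtained by deleting `w`. -/
def sliceWeight {V : Type} [Fintype V] [DecidableEq V] (narr : V → V → ℕ) (w : V)
    (nroot : V → ℕ) (r : V → ℕ) (j : V) : ℤ :=
  (nroot j : ℤ) - ∑ k ∈ Finset.univ.erase w, (marr narr r j k : ℤ) * nroot k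

/-- The defect `d_R(δ) = Σ_{j ≠ w} w_j δ_R(j)` of a function `δ` at the slice `r`. -/
def sliceDefect {V : Type} [Fintype V] [DecidableEq V] (narr : V → V → ℕ) (w : V)
    (nroot : V → ℕ) (r : V → ℕ) (δ : ℕ × V → ℤ) : ℤ :=
  ∑ j ∈ Finset.univ.erase w, sliceWeight narr w nroot r j * δ (r j, j)

/-- Lemma R.defekt (a): For a quiver consisting of a tame quiver (of type
`Ã`, `D̃`, `Ẽ`, with null-root `nroot`) together with one additional vertex `w`, a slice `r`,
and a vertex `p ≠ w` which is a source of `r`: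
`d_R(δ) - d_{r_p(R)}(δ) = n_p (-δ_R(p) - δ_{r_p(R)}(p) - Σ_{q ≠ p,w} C_{pq} δ_R(q))`. -/
theorem slice_defect_reflection (V : Type) [Fintype V] [DecidableEq V]
    (narr : V → V → ℕ) (hloop : ∀ q, narr q q = 0)
    (w : V) (nroot : V → ℕ)
    (hpos : ∀ j, j ≠ w → 0 < nroot j)
    (hker : ∀ j, j ≠ w → ∑ k ∈ Finset.univ.erase w, cartan narr j k * (nroot k : ℤ) = 0)
    (r : V → ℕ) (hr : IsSlice narr r)
    (p : V) (hpw : p ≠ w) (hsrc : IsSourceAt narr r p)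
    (δ : ℕ × V → ℤ) :
    sliceDefect narr w nroot r δ - sliceDefect narr w nroot (reflectSlice r p) δ =
      (nroot p : ℤ) *
        (-(δ (r p, p)) - δ (r p + 1, p) -
          ∑ q ∈ (Finset.univ.erase w).erase p, cartan narr p q * δ (r q, q)) := by

  classical
  set E := Finset.univ.erase w with hE
  have hpE : p ∈ E := Finset.mem_erase.mpr ⟨hpw, Finset.mem_univ p⟩
  set r' := reflectSlice r p with hr'def
  have hr'p : r' p = r p + 1 := Function.update_self _ _ _
  have hr'ne : ∀ j, j ≠ p → r' j = r j := fun j hj => Function.update_of_ne hj _ _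
  -- weight at p for r
  have hwp : sliceWeight narr w nroot r p = -(nroot p : ℤ) := by
    have hsum : ∑ k ∈ E, (marr narr r p k : ℤ) * nroot k
        = ∑ k ∈ E, (((if p = k then (2:ℤ) else 0) - cartan narr p k) * nroot k) := by
      refine Finset.sum_congr rfl fun k _ => ?_
      by_cases hkp : k = p
      · subst hkp
        simp [marr, cartan, hloop]
      · have h1 : (if r k = r p then narr k p else 0) = narr k p := by
          rcases Nat.eq_zero_or_pos (narr k p) with h | h
          · simp [h]
          · simp [hsrc.2 k h]
        have h2 : (if r k = r p + 1 then narr p k else 0) = narr p k := by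
          rcases Nat.eq_zero_or_pos (narr p k) with h | h
          · simp [h]
          · simp [hsrc.1 k h]
        have hpk : p ≠ k := Ne.symm hkp
        simp only [marr, h1, h2, cartan, Matrix.of_apply, if_neg hpk]
        push_cast
        ring
    have h2np : ∑ k ∈ E, ((if p = k then (2:ℤ) else 0) * nroot k) = 2 * nroot p := by
      simp [ite_mul, Finset.sum_ite_eq, hpE]
    unfold sliceWeight
    rw [hsum]
    simp only [sub_mul, Finset.sum_sub_distrib]
    rw [h2np, hker p hpw]
    push_cast
    ring
  -- weight at p for r'
  have hwp' : sliceWeight narr w nroot r' p = (nroot p : ℤ) := by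
    have hzero : ∀ k ∈ E, (marr narr r' p k : ℤ) * nroot k = 0 := by
      intro k _
      by_cases hkp : k = p
      · subst hkp
        simp [marr, hr'p, hloop]
      · have hk : r' k = r k := hr'ne k hkp
        have h1 : (if r' k = r' p then narr k p else 0) = 0 := by
          rcases Nat.eq_zero_or_pos (narr k p) with h | h
          · simp [h]
          · have := hsrc.2 k h
            rw [hk, hr'p, this]
            simp
        have h2 : (if r' k = r' p + 1 then narr p k else 0) = 0 := by
          rcases Nat.eq_zero_or_pos (narr p k) with h | h
          · simp [h]
          · have := hsrc.1 k h
            rw [hk, hr'p, this]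
            simp
        simp [marr, h1, h2]
    unfold sliceWeight
    rw [Finset.sum_eq_zero hzero]
    ring
  -- weight difference at j ≠ p
  have hwdiff : ∀ j ∈ E.erase p,
      sliceWeight narr w nroot r j - sliceWeight narr w nroot r' j
        = ((narr p j : ℤ) + narr j p) * nroot p := by
    intro j hj
    have hjp : j ≠ p := (Finset.mem_erase.mp hj).1
    have hrj : r' j = r j := hr'ne j hjp
    unfold sliceWeight
    have key : ∑ k ∈ E, ((marr narr r' j k : ℤ) * nroot k)
          - ∑ k ∈ E, ((marr narr r j k : ℤ) * nroot k)
        = ∑ k ∈ E, (if k = p then (((narr p j : ℤ) + narr j p) * nroot k) else 0) := by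
      rw [← Finset.sum_sub_distrib]
      refine Finset.sum_congr rfl fun k _ => ?_
      by_cases hkp : k = p
      · rw [if_pos hkp, hkp]
        have hm1 : marr narr r j p = 0 := by
          have h1 : (if r p = r j then narr p j else 0) = 0 := by
            rcases Nat.eq_zero_or_pos (narr p j) with h | h
            · simp [h]
            · have := hsrc.1 j h
              rw [this]
              simp
          have h2 : (if r p = r j + 1 then narr j p else 0) = 0 := by
            rcases Nat.eq_zero_or_pos (narr j p) with h | h
            · simp [h]
            · have := hsrc.2 j h
              rw [this]
              simp
          simp [marr, h1, h2]
        have hm2 : marr narr r' j p = narr p j + narr j p := by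
          have h1 : (if r' p = r' j then narr p j else 0) = narr p j := by
            rcases Nat.eq_zero_or_pos (narr p j) with h | h
            · simp [h]
            · rw [hr'p, hrj, hsrc.1 j h]
              simp
          have h2 : (if r' p = r' j + 1 then narr j p else 0) = narr j p := by
            rcases Nat.eq_zero_or_pos (narr j p) with h | h
            · simp [h]
            · rw [hr'p, hrj, hsrc.2 j h]
              simp
          simp [marr, h1, h2]
        rw [hm1, hm2]
        push_cast
        ring
      · have hk : r' k = r k := hr'ne k hkp
        have : marr narr r' j k = marr narr r j k := by
          simp [marr, hk, hrj]
        rw [this, if_neg hkp]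
        ring
    rw [sub_sub_sub_cancel_left, key, Finset.sum_ite_eq' E p
      (fun k => (((narr p j : ℤ) + narr j p) * nroot k)), if_pos hpE]
  -- assemble
  unfold sliceDefect
  rw [← Finset.add_sum_erase E _ hpE, ← Finset.add_sum_erase E
    (fun j => sliceWeight narr w nroot r' j * δ (r' j, j)) hpE]
  have hsumdiff : ∑ j ∈ E.erase p, sliceWeight narr w nroot r j * δ (r j, j)
      - ∑ j ∈ E.erase p, sliceWeight narr w nroot r' j * δ (r' j, j)
      = (nroot p : ℤ) * (- ∑ q ∈ E.erase p, cartan narr p q * δ (r q, q)) := by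
    rw [← Finset.sum_sub_distrib, ← Finset.sum_neg_distrib, Finset.mul_sum]
    refine Finset.sum_congr rfl fun j hj => ?_
    have hjp : j ≠ p := (Finset.mem_erase.mp hj).1
    rw [hr'ne j hjp, ← sub_mul, hwdiff j hj]
    have hpj : p ≠ j := Ne.symm hjp
    simp only [cartan, Matrix.of_apply, if_neg hpj]
    ring
  rw [hwp, hwp', hr'p]
  have : ∀ a b c d e : ℤ, c - d = e → (a + c) - (b + d) = a - b + e := by
    intro a b c d e h; omega
  rw [this _ _ _ _ _ hsumdiff]
  ring
end

section
/- In the setting of Lemma R.defekt, if δ is a deformation shape then: (i) if p is connected to w by an arrow, d_R(δ) − d_{r_p(R)}(δ) ≥ −n_p · δ_R(w); (ii) if p is not connected to w, then d_R(δ) − d_{r_p(R)}(δ) ≥ 0; (iii) if d_R(δ) = d_{r_p(R)}(δ) and p is not adjacent to w, then δ|_R determines δ|_{r_p(R)} uniquely and vice versa. -/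
/-!  Combinatorial model of the preprojective component of the Auslander–Reiten quiver of a
finite acyclic quiver with vertex set `V` and `narr p q` arrows from `p` to `q`.
The pair `(l, p) : ℕ × V` represents the indecomposable preprojective module `τ^{-l} P_p`. -/

open Finset

set_option linter.unusedSectionVars false
section Aux
variable {V : Type} [Fintype V] [DecidableEq V]

lemma sdef_at_refl (narr : V → V → ℕ) (r : V → ℕ) (p : V)
    (hsrc : IsSourceAt narr r p) (dd : ℕ × V → ℕ) :
    sdef narr dd (r p + 1, p)
      = (∑ q : V, ((narr p q : ℤ) + narr q p) * dd (r q, q))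
        - dd (r p, p) - dd (r p + 1, p) := by
  have h1 : ∀ q ∈ (univ : Finset V),
      (narr p q : ℤ) * dd (r p + 1, q) = (narr p q : ℤ) * dd (r q, q) := by
    intro q _
    rcases Nat.eq_zero_or_pos (narr p q) with h | h
    · simp [h]
    · rw [hsrc.1 q h]
  have h2 : ∀ q ∈ (univ : Finset V),
      (narr q p : ℤ) * dd (r p + 1 - 1, q) = (narr q p : ℤ) * dd (r q, q) := by
    intro q _
    rcases Nat.eq_zero_or_pos (narr q p) with h | h
    · simp [h]
    · rw [Nat.add_sub_cancel, hsrc.2 q h]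
  have hne : r p + 1 ≠ 0 := Nat.succ_ne_zero _
  unfold sdef arMid
  simp only [if_neg hne]
  rw [Finset.sum_congr rfl h1, Finset.sum_congr rfl h2, ← Finset.sum_add_distrib]
  simp only [Nat.add_sub_cancel]
  have h3 : ∀ q ∈ (univ : Finset V),
      (narr p q : ℤ) * dd (r q, q) + (narr q p : ℤ) * dd (r q, q)
        = ((narr p q : ℤ) + (narr q p : ℤ)) * dd (r q, q) := by
    intro q _; ring
  rw [Finset.sum_congr rfl h3]


lemma grand_identity (narr : V → V → ℕ) (hloop : ∀ q, narr q q = 0)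
    (w : V) (nroot : V → ℕ)
    (hker : ∀ j, j ≠ w → ∑ k ∈ Finset.univ.erase w, cartan narr j k * (nroot k : ℤ) = 0)
    (r : V → ℕ) (p : V) (hpw : p ≠ w) (hsrc : IsSourceAt narr r p)
    (dd : ℕ × V → ℕ) :
    sliceDefect narr w nroot r (fun x => (dd x : ℤ)) -
        sliceDefect narr w nroot (reflectSlice r p) (fun x => (dd x : ℤ))
      = (nroot p : ℤ) *
          (sdef narr dd (r p + 1, p) - ((narr p w : ℤ) + narr w p) * dd (r w, w)) := by
  set r' := reflectSlice r p with hr'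
  have hr'p : r' p = r p + 1 := Function.update_self _ _ _
  have hr'q : ∀ q, q ≠ p → r' q = r q := fun q h => Function.update_of_ne h _ _
  set S := (Finset.univ : Finset V).erase w with hS
  have hpS : p ∈ S := Finset.mem_erase.mpr ⟨hpw, Finset.mem_univ p⟩
  -- marr computations
  have m1 : ∀ k, marr narr r p k = narr p k + narr k p := by
    intro k
    have e1 : narr p k = 0 ∨ r k = r p + 1 := (Nat.eq_zero_or_pos _).imp id (hsrc.1 k)
    have e2 : narr k p = 0 ∨ r k = r p := (Nat.eq_zero_or_pos _).imp id (hsrc.2 k)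
    unfold marr
    rcases e1 with e1 | e1 <;> rcases e2 with e2 | e2 <;> split_ifs <;> omega
  have m2 : ∀ k, marr narr r k p = 0 := by
    intro k
    have e1 : narr p k = 0 ∨ r k = r p + 1 := (Nat.eq_zero_or_pos _).imp id (hsrc.1 k)
    have e2 : narr k p = 0 ∨ r k = r p := (Nat.eq_zero_or_pos _).imp id (hsrc.2 k)
    unfold marr
    rcases e1 with e1 | e1 <;> rcases e2 with e2 | e2 <;> split_ifs <;> omega
  have m4 : ∀ k, marr narr r' k p = narr p k + narr k p := by
    intro k
    rcases eq_or_ne k p with rfl | hk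
    · simp [marr, hloop]
    · have e1 : narr p k = 0 ∨ r k = r p + 1 := (Nat.eq_zero_or_pos _).imp id (hsrc.1 k)
      have e2 : narr k p = 0 ∨ r k = r p := (Nat.eq_zero_or_pos _).imp id (hsrc.2 k)
      unfold marr
      rw [hr'q k hk, hr'p]
      rcases e1 with e1 | e1 <;> rcases e2 with e2 | e2 <;> split_ifs <;> omega
  have m3 : ∀ k, marr narr r' p k = 0 := by
    intro k
    rcases eq_or_ne k p with rfl | hk
    · simp [marr, hloop]
    · have e1 : narr p k = 0 ∨ r k = r p + 1 := (Nat.eq_zero_or_pos _).imp id (hsrc.1 k)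
      have e2 : narr k p = 0 ∨ r k = r p := (Nat.eq_zero_or_pos _).imp id (hsrc.2 k)
      unfold marr
      rw [hr'q k hk, hr'p]
      rcases e1 with e1 | e1 <;> rcases e2 with e2 | e2 <;> split_ifs <;> omega
  have m5 : ∀ j k, j ≠ p → k ≠ p → marr narr r' j k = marr narr r j k := by
    intro j k hj hk
    unfold marr
    rw [hr'q j hj, hr'q k hk]
  -- null root identity
  have hsum2 : ∑ k ∈ S.erase p, ((narr p k : ℤ) + narr k p) * nroot k = 2 * nroot p := by
    have h := hker p hpw
    rw [← Finset.sum_erase_add _ _ hpS] at h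
    have hc : cartan narr p p * (nroot p : ℤ) = 2 * nroot p := by simp [cartan]
    have hrepl : ∑ k ∈ S.erase p, cartan narr p k * (nroot k : ℤ)
        = ∑ k ∈ S.erase p, -(((narr p k : ℤ) + narr k p) * nroot k) := by
      refine Finset.sum_congr rfl fun k hk => ?_
      have hkp : k ≠ p := Finset.ne_of_mem_erase hk
      simp only [cartan, Matrix.of_apply, if_neg (Ne.symm hkp)]
      ring
    rw [hrepl, Finset.sum_neg_distrib, hc] at h
    linarith
  -- sum over S of weights at p
  have hsumS : ∑ k ∈ S, ((narr p k : ℤ) + narr k p) * nroot k = 2 * nroot p := by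
    rw [← Finset.sum_erase_add _ _ hpS, hsum2]
    simp [hloop]
  -- weight at p, slice r
  have wp : sliceWeight narr w nroot r p = -(nroot p : ℤ) := by
    unfold sliceWeight
    have : ∑ k ∈ S, (marr narr r p k : ℤ) * nroot k
        = ∑ k ∈ S, ((narr p k : ℤ) + narr k p) * nroot k := by
      refine Finset.sum_congr rfl fun k _ => ?_
      rw [m1 k]; push_cast; ring
    rw [← hS, this, hsumS]; ring
  -- weight at p, slice r'
  have wp' : sliceWeight narr w nroot r' p = (nroot p : ℤ) := by
    unfold sliceWeight
    have : ∑ k ∈ S, (marr narr r' p k : ℤ) * nroot k = 0 := by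
      refine Finset.sum_eq_zero fun k _ => ?_
      rw [m3 k]; simp
    rw [← hS, this]; ring
  -- weight difference off p
  have wdiff : ∀ j, j ≠ p → sliceWeight narr w nroot r j
      = sliceWeight narr w nroot r' j + ((narr p j : ℤ) + narr j p) * nroot p := by
    intro j hj
    unfold sliceWeight
    have key : ∑ k ∈ S, (marr narr r' j k : ℤ) * nroot k
        = ∑ k ∈ S, (marr narr r j k : ℤ) * nroot k + ((narr p j : ℤ) + narr j p) * nroot p := by
      rw [← Finset.sum_erase_add _ _ hpS, ← Finset.sum_erase_add _ (fun k => (marr narr r j k : ℤ) * nroot k) hpS]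
      have e1 : ∑ k ∈ S.erase p, (marr narr r' j k : ℤ) * nroot k
          = ∑ k ∈ S.erase p, (marr narr r j k : ℤ) * nroot k := by
        refine Finset.sum_congr rfl fun k hk => ?_
        rw [m5 j k hj (Finset.ne_of_mem_erase hk)]
      rw [e1, m4 j, m2 j]
      push_cast; ring
    rw [← hS, key]; ring
  -- main computation
  unfold sliceDefect
  simp only [← hS]
  rw [← Finset.sum_sub_distrib, ← Finset.sum_erase_add _ _ hpS]
  have hoff : ∑ j ∈ S.erase p,
      (sliceWeight narr w nroot r j * (dd (r j, j) : ℤ)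
        - sliceWeight narr w nroot r' j * (dd (r' j, j) : ℤ))
      = (nroot p : ℤ) * ∑ j ∈ S.erase p, ((narr p j : ℤ) + narr j p) * dd (r j, j) := by
    rw [Finset.mul_sum]
    refine Finset.sum_congr rfl fun j hj => ?_
    have hjp : j ≠ p := Finset.ne_of_mem_erase hj
    rw [hr'q j hjp, wdiff j hjp]
    ring
  rw [hoff, wp, wp', hr'p]
  rw [sdef_at_refl narr r p hsrc dd]
  -- now pure algebra relating the sum over S.erase p with the sum over univ
  have hw : w ∉ S := fun hw => (Finset.mem_erase.mp hw).1 rfl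
  have split1 : ∑ q : V, ((narr p q : ℤ) + narr q p) * dd (r q, q)
      = (∑ q ∈ S, ((narr p q : ℤ) + narr q p) * dd (r q, q))
        + ((narr p w : ℤ) + narr w p) * dd (r w, w) := by
    rw [← Finset.sum_erase_add Finset.univ _ (Finset.mem_univ w), ← hS]
  have split2 : ∑ q ∈ S, ((narr p q : ℤ) + narr q p) * dd (r q, q)
      = (∑ q ∈ S.erase p, ((narr p q : ℤ) + narr q p) * dd (r q, q)) := by
    rw [← Finset.sum_erase_add _ _ hpS]
    simp [hloop]
  rw [split1, split2]
  ring

end Aux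

/-- Lemma R.defekt (b),(c): In the setting of Lemma R.defekt, for a
deformation shape `δ` of `(U, V)` (with the reflected point `(r p + 1, p)` distinct from `U`
and `V`, so that the subadditivity inequality applies there):
(i) if `p` and `w` are joined by an arrow, `d_R(δ) - d_{r_p(R)}(δ) ≥ -n_p δ_R(w)`;
(ii) if `p` and `w` are not adjacent, `d_R(δ) - d_{r_p(R)}(δ) ≥ 0`;
(iii) if moreover the two defects are equal, `δ|_R` determines `δ|_{r_p(R)}` uniquely and
vice versa. -/
theorem slice_defect_monotone_and_unique (V : Type) [Fintype V] [DecidableEq V]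
    (narr : V → V → ℕ) (hloop : ∀ q, narr q q = 0)
    (w : V) (nroot : V → ℕ)
    (hpos : ∀ j, j ≠ w → 0 < nroot j)
    (hker : ∀ j, j ≠ w → ∑ k ∈ Finset.univ.erase w, cartan narr j k * (nroot k : ℤ) = 0)
    (r : V → ℕ) (hr : IsSlice narr r)
    (p : V) (hpw : p ≠ w) (hsrc : IsSourceAt narr r p)
    (U Vv : ℕ × V) (δ : DefShape narr U Vv)
    (hpU : ((r p + 1, p) : ℕ × V) ≠ U) (hpV : ((r p + 1, p) : ℕ × V) ≠ Vv) :
    ((narr p w + narr w p = 1) →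
      sliceDefect narr w nroot r (fun x => (δ.d x : ℤ)) -
          sliceDefect narr w nroot (reflectSlice r p) (fun x => (δ.d x : ℤ)) ≥
        -((nroot p : ℤ) * δ.d (r w, w))) ∧
    ((narr p w = 0 ∧ narr w p = 0) →
      0 ≤ sliceDefect narr w nroot r (fun x => (δ.d x : ℤ)) -
        sliceDefect narr w nroot (reflectSlice r p) (fun x => (δ.d x : ℤ))) ∧
    ((narr p w = 0 ∧ narr w p = 0) →
      sliceDefect narr w nroot r (fun x => (δ.d x : ℤ)) =
        sliceDefect narr w nroot (reflectSlice r p) (fun x => (δ.d x : ℤ)) →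
      ∀ δ' : DefShape narr U Vv,
        sliceDefect narr w nroot r (fun x => (δ'.d x : ℤ)) =
          sliceDefect narr w nroot (reflectSlice r p) (fun x => (δ'.d x : ℤ)) →
        ((∀ q, δ.d (r q, q) = δ'.d (r q, q)) →
            δ.d (r p + 1, p) = δ'.d (r p + 1, p)) ∧
        ((∀ q, δ.d (reflectSlice r p q, q) = δ'.d (reflectSlice r p q, q)) →
            δ.d (r p, p) = δ'.d (r p, p))) := by
  have s0 : 0 ≤ sdef narr δ.d (r p + 1, p) := δ.subadd _ hpU hpV
  have hnp : (0:ℤ) ≤ (nroot p : ℤ) := Int.natCast_nonneg _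
  have G := grand_identity narr hloop w nroot hker r p hpw hsrc δ.d
  refine ⟨?_, ?_, ?_⟩
  · intro h1
    have hb : ((narr p w : ℤ) + narr w p) = 1 := by exact_mod_cast h1
    rw [ge_iff_le, G, hb]
    have hdw : (0:ℤ) ≤ (δ.d (r w, w) : ℤ) := Int.natCast_nonneg _
    nlinarith [mul_nonneg hnp s0]
  · rintro ⟨h1, h2⟩
    have hb : ((narr p w : ℤ) + narr w p) = 0 := by simp [h1, h2]
    rw [G, hb]
    simpa using mul_nonneg hnp s0
  · rintro ⟨h1, h2⟩ heq δ' heq'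
    have hb : ((narr p w : ℤ) + narr w p) = 0 := by simp [h1, h2]
    have s0' : 0 ≤ sdef narr δ'.d (r p + 1, p) := δ'.subadd _ hpU hpV
    have G' := grand_identity narr hloop w nroot hker r p hpw hsrc δ'.d
    rw [hb] at G G'
    have hnp' : (0:ℤ) < (nroot p : ℤ) := by exact_mod_cast hpos p hpw
    have hz : sdef narr δ.d (r p + 1, p) = 0 := by
      have hd : (nroot p : ℤ) * (sdef narr δ.d (r p + 1, p) - 0 * δ.d (r w, w)) = 0 := by
        rw [← G, heq]; ring
      simp only [zero_mul, sub_zero, mul_eq_zero] at hd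
      rcases hd with hd | hd
      · exact absurd hd hnp'.ne'
      · exact hd
    have hz' : sdef narr δ'.d (r p + 1, p) = 0 := by
      have hd : (nroot p : ℤ) * (sdef narr δ'.d (r p + 1, p) - 0 * δ'.d (r w, w)) = 0 := by
        rw [← G', heq']; ring
      simp only [zero_mul, sub_zero, mul_eq_zero] at hd
      rcases hd with hd | hd
      · exact absurd hd hnp'.ne'
      · exact hd
    have E : (∑ q : V, ((narr p q : ℤ) + narr q p) * δ.d (r q, q))
        = (δ.d (r p, p) : ℤ) + δ.d (r p + 1, p) := by
      have h := sdef_at_refl narr r p hsrc δ.d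
      rw [hz] at h; linarith
    have E' : (∑ q : V, ((narr p q : ℤ) + narr q p) * δ'.d (r q, q))
        = (δ'.d (r p, p) : ℤ) + δ'.d (r p + 1, p) := by
      have h := sdef_at_refl narr r p hsrc δ'.d
      rw [hz'] at h; linarith
    constructor
    · intro hv
      have hsum : (∑ q : V, ((narr p q : ℤ) + narr q p) * δ.d (r q, q))
          = ∑ q : V, ((narr p q : ℤ) + narr q p) * δ'.d (r q, q) :=
        Finset.sum_congr rfl fun q _ => by rw [hv q]
      rw [hsum, E'] at E
      have hp0 := hv p
      omega
    · intro hv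
      have hsum : (∑ q : V, ((narr p q : ℤ) + narr q p) * δ.d (r q, q))
          = ∑ q : V, ((narr p q : ℤ) + narr q p) * δ'.d (r q, q) := by
        refine Finset.sum_congr rfl fun q _ => ?_
        rcases eq_or_ne q p with rfl | hq
        · simp [hloop]
        · have h := hv q
          rw [show reflectSlice r p q = r q from Function.update_of_ne hq _ _] at h
          rw [h]
      have hvp : δ.d (r p + 1, p) = δ'.d (r p + 1, p) := by
        have h := hv p
        rwa [show reflectSlice r p p = r p + 1 from Function.update_self _ _ _] at h
      rw [hsum, E'] at E
      omega
end

section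
/- Let Q be the quiver V_m with two vertices p, q and m ≥ 3 arrows from q to p. For preprojective indecomposables U ⪯ V with τ⁻¹U ⪯ V there is a unique minimal deformation shape δ, given by δ(W) = 1 if U ⪯ W ⪯ τ⁻¹V and δ(W) = 0 otherwise; its codimension is unbounded as the distance between U and V grows. Hence V_m admits minimal disjoint degenerations of arbitrarily high codimension. -/
/-!  Combinatorial model of the preprojective component of the Auslander–Reiten quiver of a
finite acyclic quiver with vertex set `V` and `narr p q` arrows from `p` to `q`.
The pair `(l, p) : ℕ × V` represents the indecomposable preprojective module `τ^{-l} P_p`. -/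

open Finset

/-- The generalized Kronecker quiver `V_m`: two vertices `p = 0`, `q = 1` and `m` arrows
from `q` to `p`. -/
def narrKron (m : ℕ) : Fin 2 → Fin 2 → ℕ := fun i j => if i = 1 ∧ j = 0 then m else 0

namespace KronAux

def idx (x : ℕ × Fin 2) : ℕ := 2 * x.1 + x.2.val

def node (n : ℕ) : ℕ × Fin 2 := (n / 2, ⟨n % 2, by omega⟩)

lemma idx_node (n : ℕ) : idx (node n) = n := by
  simp only [idx, node]; omega

lemma node_idx (x : ℕ × Fin 2) : node (idx x) = x := by
  obtain ⟨l, v⟩ := x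
  have hv := v.isLt
  simp only [idx, node, Prod.mk.injEq]
  constructor
  · omega
  · apply Fin.ext
    show (2 * l + v.val) % 2 = v.val
    omega

lemma idx_inj {a b : ℕ × Fin 2} (h : idx a = idx b) : a = b := by
  rw [← node_idx a, ← node_idx b, h]

lemma arrow_iff {m : ℕ} (hm : 0 < m) (a b : ℕ × Fin 2) :
    ArrowTo (narrKron m) a b ↔ idx b = idx a + 1 := by
  obtain ⟨l, v⟩ := a; obtain ⟨k, w⟩ := b
  constructor
  · rintro (⟨h1, h2⟩ | ⟨h1, h2⟩)
    · rw [narrKron] at h2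
      split at h2
      · rename_i hc
        obtain ⟨hw, hv⟩ := hc
        subst hw hv
        simp only [idx] at *
        omega
      · omega
    · rw [narrKron] at h2
      split at h2
      · rename_i hc
        obtain ⟨hw, hv⟩ := hc
        subst hw hv
        simp only [idx] at *
        omega
      · omega
  · intro h
    simp only [idx] at h
    fin_cases v <;> fin_cases w <;> simp_all [ArrowTo, narrKron] <;> omega

lemma pre_of_le {m : ℕ} (hm : 0 < m) (a : ℕ × Fin 2) (k : ℕ) :
    Pre (narrKron m) a (node (idx a + k)) := by
  induction k with
  | zero => rw [Nat.add_zero, node_idx]; exact Relation.ReflTransGen.refl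
  | succ n ih =>
      refine Relation.ReflTransGen.tail ih ?_
      rw [arrow_iff hm, idx_node, idx_node]; omega

lemma pre_iff {m : ℕ} (hm : 0 < m) (a b : ℕ × Fin 2) :
    Pre (narrKron m) a b ↔ idx a ≤ idx b := by
  constructor
  · intro h
    induction h with
    | refl => exact le_refl _
    | tail _ hstep ih => rw [(arrow_iff hm _ _).1 hstep]; omega
  · intro h
    obtain ⟨k, hk⟩ := Nat.exists_eq_add_of_le h
    have := pre_of_le hm a k
    rwa [← hk, node_idx] at this


lemma node_even (l : ℕ) : node (2 * l) = (l, 0) := by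
  apply idx_inj; rw [idx_node]; simp [idx]

lemma node_odd (l : ℕ) : node (2 * l + 1) = (l, 1) := by
  apply idx_inj; rw [idx_node]; simp [idx]

lemma sdef_even (m : ℕ) (d : ℕ × Fin 2 → ℕ) (l : ℕ) :
    sdef (narrKron m) d (l, 0) =
      (if l = 0 then 0 else (m : ℤ) * d (l - 1, 1) - d (l - 1, 0)) - d (l, 0) := by
  simp only [sdef, arMid, narrKron, Fin.sum_univ_two]
  rcases Nat.eq_zero_or_pos l with rfl | hl
  · norm_num
  · simp only [if_neg (show ¬ l = 0 by omega)]
    norm_num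
    try ring

lemma sdef_odd (m : ℕ) (d : ℕ × Fin 2 → ℕ) (l : ℕ) :
    sdef (narrKron m) d (l, 1) =
      (m : ℤ) * d (l, 0) - (if l = 0 then 0 else (d (l - 1, 1) : ℤ)) - d (l, 1) := by
  simp only [sdef, arMid, narrKron, Fin.sum_univ_two]
  rcases Nat.eq_zero_or_pos l with rfl | hl
  · norm_num
  · simp only [if_neg (show ¬ l = 0 by omega)]
    norm_num
    try ring

lemma node_zero : node 0 = ((0 : ℕ), (0 : Fin 2)) := by
  have := node_even 0
  simpa using this

lemma sdef_formula (m : ℕ) (d : ℕ × Fin 2 → ℕ) (n : ℕ) :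
    sdef (narrKron m) d (node n) =
      (if n = 0 then 0 else (m : ℤ) * d (node (n - 1))) -
        (if 2 ≤ n then (d (node (n - 2)) : ℤ) else 0) - d (node n) := by
  rcases Nat.even_or_odd n with ⟨l, hn⟩ | ⟨l, hn⟩
  · have hn2 : n = 2 * l := by omega
    subst hn2
    rw [node_even, sdef_even]
    rcases Nat.eq_zero_or_pos l with rfl | hl
    · norm_num [node_zero]
    · obtain ⟨l', rfl⟩ : ∃ l', l = l' + 1 := ⟨l - 1, by omega⟩
      have h1 : 2 * (l' + 1) - 1 = 2 * l' + 1 := by omega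
      have h2 : 2 * (l' + 1) - 2 = 2 * l' := by omega
      have h3 : l' + 1 - 1 = l' := by omega
      rw [h1, h2, h3, node_odd, node_even]
      rw [if_neg (show ¬ (l' + 1 = 0) by omega), if_neg (show ¬ (2 * (l' + 1) = 0) by omega),
        if_pos (show 2 ≤ 2 * (l' + 1) by omega)]
  · subst hn
    rw [node_odd, sdef_odd]
    rcases Nat.eq_zero_or_pos l with rfl | hl
    · norm_num [node_zero, node_even]
    · obtain ⟨l', rfl⟩ : ∃ l', l = l' + 1 := ⟨l - 1, by omega⟩
      have h1 : 2 * (l' + 1) + 1 - 1 = 2 * (l' + 1) := by omega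
      have h2 : 2 * (l' + 1) + 1 - 2 = 2 * l' + 1 := by omega
      have h3 : l' + 1 - 1 = l' := by omega
      rw [h1, h2, h3, node_even, node_odd]
      rw [if_neg (show ¬ (l' + 1 = 0) by omega), if_neg (show ¬ (2 * (l' + 1) + 1 = 0) by omega),
        if_pos (show 2 ≤ 2 * (l' + 1) + 1 by omega)]

lemma idx_tauInv (x : ℕ × Fin 2) : idx (tauInv x) = idx x + 2 := by
  simp [idx, tauInv]; ring

lemma idx_tauAR {x : ℕ × Fin 2} (hx : 2 ≤ idx x) : idx (tauAR x) = idx x - 2 := by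
  have hv := x.2.isLt
  simp only [idx, tauAR] at *
  omega

lemma tauAR_eq_node {Vv : ℕ × Fin 2} (h : 2 ≤ idx Vv) : tauAR Vv = node (idx Vv - 2) := by
  rw [← node_idx (tauAR Vv), idx_tauAR h]

/-- The indicator of the interval `[U, τV]`. -/
def d0fun (U Vv : ℕ × Fin 2) : ℕ × Fin 2 → ℕ :=
  fun W => if idx U ≤ idx W ∧ idx W ≤ idx Vv - 2 then 1 else 0

lemma d0fun_node (U Vv : ℕ × Fin 2) (k : ℕ) :
    d0fun U Vv (node k) = if idx U ≤ k ∧ k ≤ idx Vv - 2 then 1 else 0 := by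
  simp [d0fun, idx_node]

/-- The minimal deformation shape. -/
def minShape (m : ℕ) (hm : 3 ≤ m) (U Vv : ℕ × Fin 2) (h2 : idx U + 2 ≤ idx Vv) :
    DefShape (narrKron m) U Vv where
  d := d0fun U Vv
  supp := by
    intro W hW
    rw [d0fun] at hW
    split at hW
    · rename_i hc
      constructor
      · rw [pre_iff (by omega)]; exact hc.1
      · rw [pre_iff (by omega), idx_tauAR (by omega)]; exact hc.2
    · omega
  subadd := by
    intro W hU hV
    have hU' : idx W ≠ idx U := fun h => hU (idx_inj h)
    have hV' : idx W ≠ idx Vv := fun h => hV (idx_inj h)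
    rw [← node_idx W, sdef_formula]
    simp only [d0fun_node]
    split_ifs <;> push_cast <;> omega
  normU := by
    rw [d0fun, if_pos]
    exact ⟨le_refl _, by omega⟩
  normV := by
    rw [d0fun, idx_tauAR (by omega), if_pos]
    exact ⟨by omega, le_refl _⟩

/-- Every deformation shape is positive on the whole interval `[U, τV]`. -/
lemma shape_pos {m : ℕ} (hm : 3 ≤ m) {U Vv : ℕ × Fin 2} (h2 : idx U + 2 ≤ idx Vv)
    (δ : DefShape (narrKron m) U Vv) {n : ℕ} (h1 : idx U ≤ n) (hb : n ≤ idx Vv - 2) :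
    1 ≤ δ.d (node n) := by
  rcases eq_or_lt_of_le hb with rfl | hlt
  · rw [← tauAR_eq_node (by omega), δ.normV]
  by_contra hzero
  have h0 : δ.d (node n) = 0 := by omega
  have key : ∀ j, j ≤ n - idx U → δ.d (node (n - j)) = 0 := by
    intro j
    induction j with
    | zero => intro _; simpa using h0
    | succ j ih =>
        intro hj
        have hij := ih (by omega)
        have hs := δ.subadd (node (n - j + 1))
          (fun h => by have := congrArg idx h; rw [idx_node] at this; omega)
          (fun h => by have := congrArg idx h; rw [idx_node] at this; omega)
        rw [sdef_formula] at hs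
        rw [if_neg (show ¬ (n - j + 1 = 0) by omega),
          if_pos (show 2 ≤ n - j + 1 by omega)] at hs
        rw [show n - j + 1 - 1 = n - j by omega, hij,
          show n - j + 1 - 2 = n - (j + 1) by omega] at hs
        have hnn : (0 : ℤ) ≤ δ.d (node (n - j + 1)) := Int.natCast_nonneg _
        have hnn2 : (0 : ℤ) ≤ δ.d (node (n - (j + 1))) := Int.natCast_nonneg _
        have : (δ.d (node (n - (j + 1))) : ℤ) = 0 := by push_cast at hs ⊢; omega
        exact_mod_cast this
  have := key (n - idx U) (le_refl _)
  rw [show n - (n - idx U) = idx U by omega, node_idx, δ.normU] at this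
  omega

end KronAux

open KronAux in
/-- For the wild generalized Kronecker quiver `V_m` (`m ≥ 3`) and any pair of
preprojective indecomposables `U ⪯ V` with `τ⁻¹U ⪯ V`, there is a unique minimal deformation
shape: the indicator function of the interval `[U, τV]` (it is minimal even as a pointwise
minimum among all deformation shapes of `(U, V)`).  Moreover its codimension is unbounded as
the distance of `U` and `V` grows: `V_m` admits minimal disjoint degenerations of arbitrarily
high codimension. -/
theorem kronecker_minimal_shape_unbounded_codim (m : ℕ) (hm : 3 ≤ m) :
    (∀ (U Vv : ℕ × Fin 2), Pre (narrKron m) (tauInv U) Vv →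
      ∃ δ0 : DefShape (narrKron m) U Vv,
        (∀ W, δ0.d W ≤ 1) ∧
        (∀ W, 0 < δ0.d W ↔ (Pre (narrKron m) U W ∧ Pre (narrKron m) W (tauAR Vv))) ∧
        (∀ δ : DefShape (narrKron m) U Vv, ∀ W, δ0.d W ≤ δ.d W)) ∧
    (∀ c : ℤ, ∃ (U Vv : ℕ × Fin 2) (_ : Pre (narrKron m) (tauInv U) Vv)
        (δ : DefShape (narrKron m) U Vv),
      (∀ δ' : DefShape (narrKron m) U Vv, ∀ W, δ.d W ≤ δ'.d W) ∧
      c ≤ codim (narrKron m) U Vv δ) := by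
  have hmin : ∀ (U Vv : ℕ × Fin 2) (h2 : idx U + 2 ≤ idx Vv)
      (δ : DefShape (narrKron m) U Vv) (W : ℕ × Fin 2),
      (minShape m hm U Vv h2).d W ≤ δ.d W := by
    intro U Vv h2 δ W
    show d0fun U Vv W ≤ δ.d W
    rw [d0fun]
    split
    · rename_i hc
      have := shape_pos hm h2 δ hc.1 hc.2
      rwa [node_idx] at this
    · exact Nat.zero_le _
  constructor
  · intro U Vv hpre
    rw [pre_iff (by omega), idx_tauInv] at hpre
    refine ⟨minShape m hm U Vv hpre, ?_, ?_, hmin U Vv hpre⟩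
    · intro W
      show d0fun U Vv W ≤ 1
      rw [d0fun]; split <;> omega
    · intro W
      constructor
      · exact (minShape m hm U Vv hpre).supp W
      · rintro ⟨h1, h2⟩
        rw [pre_iff (by omega)] at h1
        rw [pre_iff (by omega), idx_tauAR (by omega)] at h2
        show 0 < d0fun U Vv W
        rw [d0fun, if_pos ⟨h1, h2⟩]
        omega
  · intro c
    set L : ℕ := c.toNat + 2 with hL
    set U : ℕ × Fin 2 := (0, 0) with hU
    set Vv : ℕ × Fin 2 := (L, 0) with hVv
    have hiU : idx U = 0 := by simp [idx, hU]
    have hiV : idx Vv = 2 * L := by simp [idx, hVv]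
    have h2 : idx U + 2 ≤ idx Vv := by omega
    set δ := minShape m hm U Vv h2 with hδ
    have hd : δ.d = d0fun U Vv := rfl
    refine ⟨U, Vv, ?_, δ, fun δ' W => hmin U Vv h2 δ' W, ?_⟩
    · rw [pre_iff (by omega), idx_tauInv]; omega
    · -- codim bound
      rw [codim]
      set sub : Finset (ℕ × Fin 2) :=
        (Finset.Icc 1 (L - 1)).image (fun l => ((l : ℕ), (0 : Fin 2))) with hsub
      have hsubset : sub ⊆ codimBox U Vv := by
        intro W hW
        rw [hsub, Finset.mem_image] at hW
        obtain ⟨l, hl, rfl⟩ := hW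
        rw [Finset.mem_Icc] at hl
        rw [codimBox, Finset.mem_erase, Finset.mem_erase, Finset.mem_product]
        refine ⟨?_, ?_, ?_, ?_⟩
        · rw [hVv]; intro h; rw [Prod.mk.injEq] at h; omega
        · rw [hU]; intro h; rw [Prod.mk.injEq] at h; omega
        · rw [hVv, Finset.mem_range]; omega
        · exact Finset.mem_univ _
      have hnonneg : ∀ W ∈ codimBox U Vv, 0 ≤ sdef (narrKron m) δ.d W * δ.d W := by
        intro W hWbox
        rw [codimBox, Finset.mem_erase, Finset.mem_erase] at hWbox
        exact mul_nonneg (δ.subadd W hWbox.2.1 hWbox.1) (Int.natCast_nonneg _)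
      have hone : ∀ W ∈ sub, (1 : ℤ) ≤ sdef (narrKron m) δ.d W * δ.d W := by
        intro W hW
        rw [hsub, Finset.mem_image] at hW
        obtain ⟨l, hl, rfl⟩ := hW
        rw [Finset.mem_Icc] at hl
        have hnode : ((l : ℕ), (0 : Fin 2)) = node (2 * l) := (node_even l).symm
        rw [hd, hnode, sdef_formula, d0fun_node, d0fun_node, d0fun_node,
          if_neg (show ¬ (2 * l = 0) by omega), if_pos (show 2 ≤ 2 * l by omega)]
        rw [hiU, hiV]
        rw [if_pos (show 0 ≤ 2 * l - 1 ∧ 2 * l - 1 ≤ 2 * L - 2 by omega),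
          if_pos (show 0 ≤ 2 * l - 2 ∧ 2 * l - 2 ≤ 2 * L - 2 by omega),
          if_pos (show 0 ≤ 2 * l ∧ 2 * l ≤ 2 * L - 2 by omega)]
        push_cast
        nlinarith [hm]
      have hcard : sub.card = L - 1 := by
        rw [hsub, Finset.card_image_of_injective _
          (fun a b h => by rwa [Prod.mk.injEq, and_iff_left rfl] at h), Nat.card_Icc]
        omega
      have hchain : (L - 1 : ℤ) ≤ ∑ W ∈ codimBox U Vv, sdef (narrKron m) δ.d W * δ.d W := by
        calc (L - 1 : ℤ) = ∑ _W ∈ sub, (1 : ℤ) := by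
              rw [Finset.sum_const, hcard, nsmul_eq_mul, mul_one]; omega
          _ ≤ ∑ W ∈ sub, sdef (narrKron m) δ.d W * δ.d W := Finset.sum_le_sum hone
          _ ≤ ∑ W ∈ codimBox U Vv, sdef (narrKron m) δ.d W * δ.d W :=
              Finset.sum_le_sum_of_subset_of_nonneg hsubset (fun i hi _ => hnonneg i hi)
      have : c ≤ (L : ℤ) - 1 := by
        have := Int.self_le_toNat c
        omega
      omega
end

section
/- Let Q be the quiver with underlying graph KK_3 (vertices a_1, a_2, a_3, doubled edges a_1 = a_2 and a_2 = a_3) with only sink a_2. For every positive integer m, set U = P_{a_2} and V = τ^{-m} P_{a_2}. Then the function δ defined by δ(τ^{-i}P_{a_1}) = 1 for even i < m−1, δ(τ^{-i}P_{a_2}) = 1 for 0 ≤ i ≤ m−1, δ(τ^{-i}P_{a_3}) = 1 for odd i < m−1, and δ = 0 otherwise, is a minimal deformation shape of U and V of codimension m. -/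
/-!  Combinatorial model of the preprojective component of the Auslander–Reiten quiver of a
finite acyclic quiver with vertex set `V` and `narr p q` arrows from `p` to `q`.
The pair `(l, p) : ℕ × V` represents the indecomposable preprojective module `τ^{-l} P_p`. -/

open Finset

/-- The quiver `KK_3`: vertices `a_1 = 0`, `a_2 = 1`, `a_3 = 2`, both edges doubled, with
`a_2` the only sink (two arrows `a_1 → a_2` and two arrows `a_3 → a_2`). -/
def narrKK3 : Fin 3 → Fin 3 → ℕ := fun i j => if j = 1 ∧ (i = 0 ∨ i = 2) then 2 else 0

/-- The deformation shape of Theorem thm_codim for `KK_3`: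
`δ(τ^{-i}P_{a_1}) = 1` for even `i < m - 1`, `δ(τ^{-i}P_{a_2}) = 1` for `0 ≤ i ≤ m - 1`,
`δ(τ^{-i}P_{a_3}) = 1` for odd `i < m - 1`, and `δ = 0` otherwise. -/
def dKK3 (m : ℕ) : ℕ × Fin 3 → ℕ := fun W =>
  if W.2 = 1 ∧ W.1 + 1 ≤ m then 1
  else if W.2 = 0 ∧ W.1 % 2 = 0 ∧ W.1 + 1 < m then 1
  else if W.2 = 2 ∧ W.1 % 2 = 1 ∧ W.1 + 1 < m then 1
  else 0
-- helper lemmas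
lemma arrowA (l : ℕ) : ArrowTo narrKK3 (l, (1:Fin 3)) (l, (0:Fin 3)) :=
  Or.inl ⟨rfl, by show 0 < narrKK3 0 1; decide⟩
lemma arrowB (l : ℕ) : ArrowTo narrKK3 (l, (1:Fin 3)) (l, (2:Fin 3)) :=
  Or.inl ⟨rfl, by show 0 < narrKK3 2 1; decide⟩
lemma arrowC (l : ℕ) : ArrowTo narrKK3 (l, (0:Fin 3)) (l+1, (1:Fin 3)) :=
  Or.inr ⟨rfl, by show 0 < narrKK3 0 1; decide⟩
lemma arrowD (l : ℕ) : ArrowTo narrKK3 (l, (2:Fin 3)) (l+1, (1:Fin 3)) :=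
  Or.inr ⟨rfl, by show 0 < narrKK3 2 1; decide⟩

lemma chain11 (l k : ℕ) : Pre narrKK3 (l, (1:Fin 3)) (l+k, (1:Fin 3)) := by
  induction k with
  | zero => exact .refl
  | succ k ih => exact (ih.tail (arrowA _)).tail (arrowC _)

lemma chain11' (l L : ℕ) (h : l ≤ L) : Pre narrKK3 (l, (1:Fin 3)) (L, (1:Fin 3)) := by
  have := chain11 l (L - l); rwa [Nat.add_sub_cancel' h] at this

lemma pre_from_U (l : ℕ) (p : Fin 3) : Pre narrKK3 (0, (1:Fin 3)) (l, p) := by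
  have h1 : Pre narrKK3 (0, (1:Fin 3)) (l, (1:Fin 3)) := chain11' 0 l (Nat.zero_le _)
  fin_cases p
  · exact h1.tail (arrowA l)
  · exact h1
  · exact h1.tail (arrowB l)

lemma sdef_0 (d : ℕ × Fin 3 → ℕ) (l : ℕ) :
    sdef narrKK3 d (l, (0:Fin 3)) =
      2 * d (l, 1) - (if l = 0 then 0 else (d (l-1, 0) : ℤ)) - d (l, 0) := by
  simp only [sdef, arMid, narrKK3, Fin.sum_univ_three, Fin.ext_iff]
  norm_num

lemma sdef_2 (d : ℕ × Fin 3 → ℕ) (l : ℕ) :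
    sdef narrKK3 d (l, (2:Fin 3)) =
      2 * d (l, 1) - (if l = 0 then 0 else (d (l-1, 2) : ℤ)) - d (l, 2) := by
  simp only [sdef, arMid, narrKK3, Fin.sum_univ_three, Fin.ext_iff]
  norm_num

lemma sdef_1 (d : ℕ × Fin 3 → ℕ) (l : ℕ) :
    sdef narrKK3 d (l+1, (1:Fin 3)) =
      2 * d (l, 0) + 2 * d (l, 2) - d (l, 1) - d (l+1, 1) := by
  simp only [sdef, arMid, narrKK3, Fin.sum_univ_three, Fin.ext_iff]
  norm_num

lemma sdef_1z (d : ℕ × Fin 3 → ℕ) :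
    sdef narrKK3 d (0, (1:Fin 3)) = - d (0, 1) := by
  simp only [sdef, arMid, narrKK3, Fin.sum_univ_three, Fin.ext_iff]
  norm_num

lemma dKK3_1 (m l : ℕ) : dKK3 m (l, (1:Fin 3)) = if l + 1 ≤ m then 1 else 0 := by
  simp [dKK3, Fin.ext_iff]
lemma dKK3_0 (m l : ℕ) : dKK3 m (l, (0:Fin 3)) = if l % 2 = 0 ∧ l + 1 < m then 1 else 0 := by
  simp [dKK3, Fin.ext_iff]
lemma dKK3_2 (m l : ℕ) : dKK3 m (l, (2:Fin 3)) = if l % 2 = 1 ∧ l + 1 < m then 1 else 0 := by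
  simp [dKK3, Fin.ext_iff]
lemma supp_lem (m : ℕ) : ∀ W, 0 < dKK3 m W →
    Pre narrKK3 ((0:ℕ),(1:Fin 3)) W ∧ Pre narrKK3 W (tauAR ((m:ℕ), (1:Fin 3))) := by
  rintro ⟨l, p⟩ h
  refine ⟨pre_from_U l p, ?_⟩
  fin_cases p
  · replace h : 0 < dKK3 m (l, (0:Fin 3)) := h
    show Pre narrKK3 (l, (0:Fin 3)) (m-1, (1:Fin 3))
    rw [dKK3_0] at h
    split_ifs at h with hc
    · exact Relation.ReflTransGen.head (arrowC l) (chain11' (l+1) (m-1) (by omega))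
    · omega
  · replace h : 0 < dKK3 m (l, (1:Fin 3)) := h
    show Pre narrKK3 (l, (1:Fin 3)) (m-1, (1:Fin 3))
    rw [dKK3_1] at h
    split_ifs at h with hc
    · exact chain11' l (m-1) (by omega)
    · omega
  · replace h : 0 < dKK3 m (l, (2:Fin 3)) := h
    show Pre narrKK3 (l, (2:Fin 3)) (m-1, (1:Fin 3))
    rw [dKK3_2] at h
    split_ifs at h with hc
    · exact Relation.ReflTransGen.head (arrowD l) (chain11' (l+1) (m-1) (by omega))
    · omega

lemma subadd_lem (m : ℕ) : ∀ W, W ≠ ((0:ℕ),(1:Fin 3)) → W ≠ ((m:ℕ),(1:Fin 3)) →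
    0 ≤ sdef narrKK3 (dKK3 m) W := by
  rintro ⟨l, p⟩ hU hV
  fin_cases p
  · show (0:ℤ) ≤ sdef narrKK3 (dKK3 m) (l, (0:Fin 3))
    rw [sdef_0, dKK3_1, dKK3_0, dKK3_0]
    split_ifs <;> push_cast <;> omega
  · replace hU : (l, (1:Fin 3)) ≠ ((0:ℕ),(1:Fin 3)) := hU
    replace hV : (l, (1:Fin 3)) ≠ ((m:ℕ),(1:Fin 3)) := hV
    have h0 : l ≠ 0 := fun h => hU (by rw [h])
    have hM : l ≠ m := fun h => hV (by rw [h])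
    obtain ⟨k, rfl⟩ : ∃ k, l = k + 1 := ⟨l - 1, by omega⟩
    show (0:ℤ) ≤ sdef narrKK3 (dKK3 m) (k+1, (1:Fin 3))
    rw [sdef_1, dKK3_1, dKK3_1, dKK3_0, dKK3_2]
    split_ifs <;> push_cast <;> omega
  · show (0:ℤ) ≤ sdef narrKK3 (dKK3 m) (l, (2:Fin 3))
    rw [sdef_2, dKK3_1, dKK3_2, dKK3_2]
    split_ifs <;> push_cast <;> omega

def shape0 (m : ℕ) (hm : 0 < m) : DefShape narrKK3 ((0:ℕ),(1:Fin 3)) ((m:ℕ),(1:Fin 3)) where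
  d := dKK3 m
  supp := supp_lem m
  subadd := subadd_lem m
  normU := by rw [dKK3_1, if_pos (by omega)]
  normV := by show dKK3 m (m-1, (1:Fin 3)) = 1; rw [dKK3_1, if_pos (by omega)]
lemma ne01 {l : ℕ} : ((l,(0:Fin 3)) : ℕ × Fin 3) ≠ ((0:ℕ),(1:Fin 3)) :=
  fun h => (by decide : (0:Fin 3) ≠ 1) (congrArg Prod.snd h)
lemma ne0V {l m : ℕ} : ((l,(0:Fin 3)) : ℕ × Fin 3) ≠ ((m:ℕ),(1:Fin 3)) :=
  fun h => (by decide : (0:Fin 3) ≠ 1) (congrArg Prod.snd h)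
lemma ne21 {l : ℕ} : ((l,(2:Fin 3)) : ℕ × Fin 3) ≠ ((0:ℕ),(1:Fin 3)) :=
  fun h => (by decide : (2:Fin 3) ≠ 1) (congrArg Prod.snd h)
lemma ne2V {l m : ℕ} : ((l,(2:Fin 3)) : ℕ × Fin 3) ≠ ((m:ℕ),(1:Fin 3)) :=
  fun h => (by decide : (2:Fin 3) ≠ 1) (congrArg Prod.snd h)
lemma ne11 {l L : ℕ} (h : l ≠ L) : ((l,(1:Fin 3)) : ℕ × Fin 3) ≠ ((L:ℕ),(1:Fin 3)) :=
  fun hE => h (congrArg Prod.fst hE)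

lemma min_lem (m : ℕ) (hm : 0 < m)
    (δ' : DefShape narrKK3 ((0:ℕ),(1:Fin 3)) ((m:ℕ),(1:Fin 3)))
    (hle : ∀ W, δ'.d W ≤ dKK3 m W) : δ'.d = dKK3 m := by
  have key : ∀ k l, l + k = m - 1 →
      δ'.d (l,(1:Fin 3)) = 1 ∧
      (l + 1 < m → δ'.d (l,(0:Fin 3)) = dKK3 m (l,(0:Fin 3)) ∧
        δ'.d (l,(2:Fin 3)) = dKK3 m (l,(2:Fin 3))) := by
    intro k
    induction k with
    | zero =>
      intro l hl
      have hl' : l = m - 1 := by omega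
      subst hl'
      exact ⟨δ'.normV, fun h => by omega⟩
    | succ k ih =>
      intro l hl
      obtain ⟨h1, -⟩ := ih (l+1) (by omega)
      have hs := δ'.subadd (l+1, (1:Fin 3)) (ne11 (by omega)) (ne11 (by omega))
      rw [sdef_1, h1] at hs
      have b0 := hle (l, (0:Fin 3)); rw [dKK3_0] at b0
      have b2 := hle (l, (2:Fin 3)); rw [dKK3_2] at b2
      have b1 := hle (l, (1:Fin 3)); rw [dKK3_1] at b1
      have hs0 := δ'.subadd (l, (0:Fin 3)) ne01 ne0V
      rw [sdef_0] at hs0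
      have hs2 := δ'.subadd (l, (2:Fin 3)) ne21 ne2V
      rw [sdef_2] at hs2
      rw [dKK3_0, dKK3_2]
      split_ifs at b0 b2 b1 hs0 hs2 ⊢ <;> push_cast at hs hs0 hs2 <;> omega
  funext W
  obtain ⟨l, p⟩ := W
  fin_cases p
  · show δ'.d (l,(0:Fin 3)) = dKK3 m (l,(0:Fin 3))
    by_cases hc : l % 2 = 0 ∧ l + 1 < m
    · exact ((key (m-1-l) l (by omega)).2 hc.2).1
    · have hb := hle (l, (0:Fin 3))
      rw [dKK3_0, if_neg hc] at hb ⊢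
      omega
  · show δ'.d (l,(1:Fin 3)) = dKK3 m (l,(1:Fin 3))
    by_cases hc : l + 1 ≤ m
    · rw [dKK3_1, if_pos hc]
      exact (key (m-1-l) l (by omega)).1
    · have hb := hle (l, (1:Fin 3))
      rw [dKK3_1, if_neg hc] at hb ⊢
      omega
  · show δ'.d (l,(2:Fin 3)) = dKK3 m (l,(2:Fin 3))
    by_cases hc : l % 2 = 1 ∧ l + 1 < m
    · exact ((key (m-1-l) l (by omega)).2 hc.2).2
    · have hb := hle (l, (2:Fin 3))
      rw [dKK3_2, if_neg hc] at hb ⊢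
      omega
lemma codim_lem (m : ℕ) (hm : 0 < m) :
    codim narrKK3 ((0:ℕ),(1:Fin 3)) ((m:ℕ),(1:Fin 3)) (shape0 m hm) = (m:ℤ) := by
  classical
  set g : ℕ × Fin 3 → ℤ := fun W =>
    if (W.2 = (0:Fin 3) ∧ W.1 % 2 = 0 ∧ W.1+1 < m) ∨
       (W.2 = (2:Fin 3) ∧ W.1 % 2 = 1 ∧ W.1+1 < m) then 1 else 0 with hg
  have hpt : ∀ W ∈ codimBox ((0:ℕ),(1:Fin 3)) ((m:ℕ),(1:Fin 3)),
      sdef narrKK3 (dKK3 m) W * (dKK3 m W : ℤ) = g W := by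
    rintro ⟨l, p⟩ hmem
    fin_cases p
    · show sdef narrKK3 (dKK3 m) (l,(0:Fin 3)) * (dKK3 m (l,(0:Fin 3)) : ℤ) = g (l,(0:Fin 3))
      have e0 : g (l,(0:Fin 3)) = if l % 2 = 0 ∧ l+1 < m then 1 else 0 := by simp [hg]
      rw [e0, sdef_0, dKK3_1, dKK3_0, dKK3_0]
      split_ifs <;> push_cast <;> omega
    · replace hmem : ((l,(1:Fin 3)) : ℕ × Fin 3) ∈
        codimBox ((0:ℕ),(1:Fin 3)) ((m:ℕ),(1:Fin 3)) := hmem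
      have hne : ((l,(1:Fin 3)) : ℕ × Fin 3) ≠ ((0:ℕ),(1:Fin 3)) :=
        (Finset.mem_erase.1 (Finset.mem_erase.1 hmem).2).1
      have h0 : l ≠ 0 := fun h => hne (by rw [h])
      obtain ⟨k, rfl⟩ : ∃ k, l = k + 1 := ⟨l - 1, by omega⟩
      show sdef narrKK3 (dKK3 m) (k+1,(1:Fin 3)) * (dKK3 m (k+1,(1:Fin 3)) : ℤ) = g (k+1,(1:Fin 3))
      have e1 : g (k+1,(1:Fin 3)) = 0 := by simp [hg]
      rw [e1, sdef_1, dKK3_1, dKK3_1, dKK3_0, dKK3_2]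
      split_ifs <;> push_cast <;> omega
    · show sdef narrKK3 (dKK3 m) (l,(2:Fin 3)) * (dKK3 m (l,(2:Fin 3)) : ℤ) = g (l,(2:Fin 3))
      have e2 : g (l,(2:Fin 3)) = if l % 2 = 1 ∧ l+1 < m then 1 else 0 := by simp [hg]
      rw [e2, sdef_2, dKK3_1, dKK3_2, dKK3_2]
      split_ifs <;> push_cast <;> omega
  have hU : g ((0:ℕ),(1:Fin 3)) = 0 := by simp [hg]
  have hV : g ((m:ℕ),(1:Fin 3)) = 0 := by simp [hg]
  show 1 + ∑ W ∈ codimBox ((0:ℕ),(1:Fin 3)) ((m:ℕ),(1:Fin 3)),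
      sdef narrKK3 (dKK3 m) W * (dKK3 m W : ℤ) = (m:ℤ)
  rw [Finset.sum_congr rfl hpt]
  rw [codimBox, Finset.sum_erase _ hV, Finset.sum_erase _ hU, Finset.sum_product]
  have hrow : ∀ l ∈ Finset.range (m+1),
      (∑ p : Fin 3, g (l, p)) = if l + 1 < m then (1:ℤ) else 0 := by
    intro l _
    rw [Fin.sum_univ_three]
    simp only [hg]
    norm_num
    split_ifs <;> omega
  rw [Finset.sum_congr rfl hrow, Finset.sum_boole]
  have : (Finset.range (m+1)).filter (fun l => l + 1 < m) = Finset.range (m-1) := by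
    ext x
    simp only [Finset.mem_filter, Finset.mem_range]
    omega
  rw [this, Finset.card_range]
  -- done
  omega

/-- For every `m > 0`, with `U = P_{a_2}` and `V = τ^{-m}P_{a_2}`, the function
`dKK3 m` is a deformation shape of `(U, V)`, it is minimal among the deformation shapes of
`(U, V)` in the pointwise order, and its codimension is `m`. -/
theorem KK3_minimal_shape_codim (m : ℕ) (hm : 0 < m) :
    ∃ δ0 : DefShape narrKK3 ((0 : ℕ), (1 : Fin 3)) ((m : ℕ), (1 : Fin 3)),
      δ0.d = dKK3 m ∧
      (∀ δ' : DefShape narrKK3 ((0 : ℕ), (1 : Fin 3)) ((m : ℕ), (1 : Fin 3)),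
        (∀ W, δ'.d W ≤ dKK3 m W) → δ'.d = dKK3 m) ∧
      codim narrKK3 ((0 : ℕ), (1 : Fin 3)) ((m : ℕ), (1 : Fin 3)) δ0 = (m : ℤ) := by
    exact ⟨shape0 m hm, rfl, fun δ' h => min_lem m hm δ' h, codim_lem m hm⟩
end
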